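/- arXiv:2205.00588 — 5 statements merged into one kernel-verified Lean document; each statement's English description precedes it below -/
import Mathlib

section
/- For any instance I with k slots, n agents and m types: Proph(I) = Σ_{j=1}^m Δ_j · E[min{X_{1j} + ... + X_{nj}, k}], where for each j the random variables X_{1j}, ..., X_{nj} are independent Bernoulli with P(X_{ij} = 1) = G_{ij}; and ExAnte(I) = Σ_{j=1}^m Δ_j · min{Σ_{i=1}^n G_{ij}, k}. -/
/-!
Writing each valuation as a telescoping sum of gaps, `r_t = Σ_{j ≥ t} Δ_j`, the value of a set of
agents becomes `Σ_j Δ_j · #{members of type ≤ j}`, and that of a fractional allocation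
`Σ_j Δ_j · (mass on types ≤ j)`. As `Δ_j ≥ 0`, each layer is at most `min(#{agents of type ≤ j}, k)`
(resp. `min(Σ_i G_ij, k)`), and all these bounds are attained at once: by the `k` agents of
smallest type, resp. by filling the types greedily in order. The indicators `[t_i ≤ j]` are
independent Bernoulli variables of parameters `G_ij`, which turns the expected layer into
`E[min{Σ_i X_ij, k}]`.
-/
open Finset

/-- `E[min{X_1+...+X_t, k}]` for independent Bernoulli `X_i` (i ∈ {1,...,t}) with success
probabilities `p i`. -/
noncomputable def eMinBer (p : ℕ → ℝ) (t k : ℕ) : ℝ :=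
  ∑ S ∈ (Finset.Icc 1 t).powerset,
    (∏ i ∈ S, p i) * (∏ i ∈ Finset.Icc 1 t \ S, (1 - p i)) * min (S.card : ℝ) (k : ℝ)

/-- Prophet's value on realized valuations `v`: the maximum of `∑_{i∈S} v i` over `S` with
`|S| ≤ k`. -/
noncomputable def prophVal (n k : ℕ) (v : Fin n → ℝ) : ℝ :=
  sSup {s : ℝ | ∃ S : Finset (Fin n), S.card ≤ k ∧ s = ∑ i ∈ S, v i}

/-- Expected prophet value on the instance given by valuations `r` and type probabilities `p`:
the expectation over the (independent) type realizations `t i ∈ {1,...,m}` of the prophet's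
value. -/
noncomputable def Proph (k n m : ℕ) (r : ℕ → ℝ) (p : ℕ → ℕ → ℝ) : ℝ :=
  ∑ t ∈ Fintype.piFinset (fun _ : Fin n => Finset.Icc 1 m),
    (∏ i : Fin n, p (i.1+1) (t i)) * prophVal n k (fun i => r (t i))

/-- The ex-ante relaxation of the instance given by valuations `r` and probabilities `p`. -/
noncomputable def ExAnte (k n m : ℕ) (r : ℕ → ℝ) (p : ℕ → ℕ → ℝ) : ℝ :=
  sSup {s : ℝ | ∃ a : ℕ → ℝ,
    (∀ j ∈ Finset.Icc 1 m, 0 ≤ a j ∧ a j ≤ ∑ i ∈ Finset.Icc 1 n, p i j) ∧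
    (∑ j ∈ Finset.Icc 1 m, a j ≤ (k : ℝ)) ∧
    s = ∑ j ∈ Finset.Icc 1 m, r j * a j}

/-- `Δ_j` of the paper. -/
def valGap (m : ℕ) (r : ℕ → ℝ) (j : ℕ) : ℝ := r j - if j < m then r (j + 1) else 0

section Layers

variable {m : ℕ} {r : ℕ → ℝ}

lemma sum_Icc_valGap {a : ℕ} (ha : a ≤ m) : ∑ j ∈ Icc a m, valGap m r j = r a := by
  induction h : m - a generalizing a with
  | zero =>
    obtain rfl : a = m := by omega
    simp [valGap]
  | succ d ih =>
    rw [← insert_Icc_add_one_left_eq_Icc ha, sum_insert (by simp), ih (by omega) (by omega),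
      valGap, if_pos (by omega)]
    ring

lemma valGap_nonneg (hr : ∀ j, 1 ≤ j → j < m → r (j + 1) ≤ r j) (hrm : 0 ≤ r m) {j : ℕ}
    (hj : j ∈ Icc 1 m) : 0 ≤ valGap m r j := by
  rw [mem_Icc] at hj
  unfold valGap
  split_ifs with h
  · linarith [hr j hj.1 h]
  · obtain rfl : j = m := by omega
    linarith

lemma sum_mul_eq_sum_valGap_mul {ι : Type*} (s : Finset ι) (t : ι → ℕ) (w : ι → ℝ)
    (ht : ∀ i ∈ s, t i ∈ Icc 1 m) :
    ∑ i ∈ s, r (t i) * w i = ∑ j ∈ Icc 1 m, valGap m r j * ∑ i ∈ s with t i ≤ j, w i := by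
  have hlayer : ∀ i ∈ s, r (t i) = ∑ j ∈ Icc 1 m, if t i ≤ j then valGap m r j else 0 := by
    intro i hi
    have hti := mem_Icc.1 (ht i hi)
    rw [← sum_filter, ← sum_Icc_valGap (r := r) hti.2]
    congr 1
    ext j
    simp only [mem_filter, mem_Icc]
    omega
  simp_rw [mul_sum, sum_filter]
  rw [sum_congr rfl fun i hi => by rw [hlayer i hi, sum_mul], sum_comm]
  refine sum_congr rfl fun j _ => sum_congr rfl fun i _ => ?_
  split_ifs <;> ring

lemma sum_eq_sum_valGap_mul_card {ι : Type*} (s : Finset ι) (t : ι → ℕ)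
    (ht : ∀ i ∈ s, t i ∈ Icc 1 m) :
    ∑ i ∈ s, r (t i) = ∑ j ∈ Icc 1 m, valGap m r j * (#{i ∈ s | t i ≤ j} : ℝ) := by
  simpa using sum_mul_eq_sum_valGap_mul s t (fun _ => 1) ht

lemma sum_mul_eq_sum_valGap_mul_sum_Icc (a : ℕ → ℝ) :
    ∑ j ∈ Icc 1 m, r j * a j = ∑ j ∈ Icc 1 m, valGap m r j * ∑ j' ∈ Icc 1 j, a j' := by
  rw [sum_mul_eq_sum_valGap_mul (Icc 1 m) (fun j => j) a fun _ h => h]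
  refine sum_congr rfl fun j hj => ?_
  congr 2
  ext j'
  simp only [mem_filter, mem_Icc] at hj ⊢
  omega

end Layers

lemma Finset.exists_subset_card_eq_forall_lt_mem {α β : Type*} [LinearOrder β] (s : Finset α)
    (f : α → β) {c : ℕ} (hc : c ≤ #s) :
    ∃ S ⊆ s, #S = c ∧ ∀ x ∈ S, ∀ y ∈ s, f y < f x → y ∈ S := by
  classical
  induction c with
  | zero => exact ⟨∅, empty_subset _, rfl, by simp⟩
  | succ c ih =>
    obtain ⟨S, hSs, hcard, hS⟩ := ih (by omega)
    have hne : (s \ S).Nonempty := by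
      rw [sdiff_nonempty]
      intro h
      have := card_le_card h
      omega
    obtain ⟨x, hx, hmin⟩ := (s \ S).exists_min_image f hne
    rw [mem_sdiff] at hx
    refine ⟨insert x S, insert_subset hx.1 hSs, by rw [card_insert_of_notMem hx.2, hcard], ?_⟩
    intro y hy z hz hzy
    rw [mem_insert] at hy ⊢
    rcases hy with rfl | hy
    · by_contra! hzS
      exact (hmin z (mem_sdiff.2 ⟨hz, hzS.2⟩)).not_gt hzy
    · exact Or.inr (hS y hy z hz hzy)

-- A lower-closed `S` of size `min #α k` either contains every `x` with `f x ≤ b`, or lies below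
-- some such `x` that it misses, and then `S` has size `k`.
lemma exists_card_filter_le_eq_min {α β : Type*} [Fintype α] [LinearOrder β] (f : α → β)
    (k : ℕ) : ∃ S : Finset α, #S ≤ k ∧ ∀ b, #{x ∈ S | f x ≤ b} = min #{x | f x ≤ b} k := by
  obtain ⟨S, -, hcard, hS⟩ := (univ : Finset α).exists_subset_card_eq_forall_lt_mem f
    (min_le_left _ k)
  refine ⟨S, hcard ▸ min_le_right _ _, fun b => ?_⟩
  by_cases hsub : ({x | f x ≤ b} : Finset α) ⊆ S
  · have hfilter : {x ∈ S | f x ≤ b} = ({x | f x ≤ b} : Finset α) := by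
      ext x
      simp only [mem_filter, mem_univ, true_and, and_iff_right_iff_imp]
      exact fun hx => hsub (by simpa using hx)
    rw [hfilter, min_eq_left ((card_le_card hsub).trans (hcard ▸ min_le_right _ _))]
  · obtain ⟨y, hy, hyS⟩ := not_subset.1 hsub
    have hSb : ∀ x ∈ S, f x ≤ b := fun x hx =>
      (not_lt.1 fun h => hyS (hS x hx y (mem_univ y) h)).trans (mem_filter.1 hy).2
    have hlt : #S < #{x | f x ≤ b} :=
      card_lt_card ⟨fun x hx => by simpa using hSb x hx, hsub⟩
    have hle : #{x | f x ≤ b} ≤ #(univ : Finset α) := card_le_univ _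
    rw [filter_true_of_mem hSb]
    omega

lemma prophVal_eq_sum_valGap {n k m : ℕ} {r : ℕ → ℝ} (hr : ∀ j, 1 ≤ j → j < m → r (j + 1) ≤ r j)
    (hrm : 0 ≤ r m) (t : Fin n → ℕ) (ht : ∀ i, t i ∈ Icc 1 m) :
    prophVal n k (fun i => r (t i)) =
      ∑ j ∈ Icc 1 m, valGap m r j * min (#{i | t i ≤ j} : ℝ) k := by
  obtain ⟨S₀, hS₀k, hS₀⟩ := exists_card_filter_le_eq_min t k
  refine IsGreatest.csSup_eq ⟨⟨S₀, hS₀k, ?_⟩, ?_⟩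
  · rw [sum_eq_sum_valGap_mul_card S₀ t fun i _ => ht i]
    simp_rw [hS₀, Nat.cast_min]
  · rintro s ⟨S, hSk, rfl⟩
    rw [sum_eq_sum_valGap_mul_card S t fun i _ => ht i]
    refine sum_le_sum fun j hj => mul_le_mul_of_nonneg_left ?_ (valGap_nonneg hr hrm hj)
    refine le_min ?_ ?_
    · exact_mod_cast card_le_card (filter_subset_filter _ (subset_univ S))
    · exact_mod_cast (card_filter_le S _).trans hSk

lemma sum_piFinset_prod_mul_eq_sum_finset {ι β : Type*} [Fintype ι] [DecidableEq ι]
    (A : Finset β) (P : β → Prop) [DecidablePred P] (w : ι → β → ℝ) (g : Finset ι → ℝ) :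
    ∑ t ∈ Fintype.piFinset (fun _ : ι => A), (∏ i, w i (t i)) * g {i | P (t i)} =
      ∑ T : Finset ι, (∏ i ∈ T, ∑ b ∈ A with P b, w i b) *
        (∏ i ∈ Tᶜ, ∑ b ∈ A with ¬P b, w i b) * g T := by
  rw [← sum_fiberwise (Fintype.piFinset fun _ : ι => A) (fun t => ({i | P (t i)} : Finset ι))]
  refine sum_congr rfl fun T _ => ?_
  have hfiber : {t ∈ Fintype.piFinset (fun _ : ι => A) | ({i | P (t i)} : Finset ι) = T} =
      Fintype.piFinset fun i => if i ∈ T then {b ∈ A | P b} else {b ∈ A | ¬P b} := by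
    ext t
    simp only [mem_filter, Fintype.mem_piFinset, Finset.ext_iff, mem_univ, true_and]
    constructor
    · rintro ⟨hA, hT⟩ i
      split_ifs with hi <;> simp [hA i, hT i, hi]
    · intro h
      refine ⟨fun i => ?_, fun i => ?_⟩ <;> have := h i <;> split_ifs at this with hi <;>
        simp_all
  rw [sum_congr rfl fun t ht => by rw [(mem_filter.1 ht).2], ← sum_mul, hfiber,
    ← prod_univ_sum, ← prod_mul_prod_compl T]
  congr 2 <;> refine prod_congr rfl fun i hi => ?_
  · rw [if_pos hi]
  · rw [if_neg (mem_compl.1 hi)]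

lemma eMinBer_eq_sum_finset (q : ℕ → ℝ) (n k : ℕ) :
    eMinBer q n k = ∑ T : Finset (Fin n),
      (∏ i ∈ T, q (i.1 + 1)) * (∏ i ∈ Tᶜ, (1 - q (i.1 + 1))) * min (#T : ℝ) k := by
  have hinj : Function.Injective fun i : Fin n => i.1 + 1 := fun i j h => Fin.ext (by simpa using h)
  have himage : univ.image (fun i : Fin n => i.1 + 1) = Icc 1 n := by
    ext x
    simp only [mem_image, mem_univ, true_and, mem_Icc]
    constructor
    · rintro ⟨i, rfl⟩
      omega
    · exact fun hx => ⟨⟨x - 1, by omega⟩, by simp only; omega⟩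
  rw [eMinBer, ← himage, powerset_image, sum_image fun _ _ _ _ h => image_injective hinj h,
    powerset_univ]
  refine sum_congr rfl fun T _ => ?_
  rw [← image_sdiff _ _ hinj, prod_image hinj.injOn, prod_image hinj.injOn,
    card_image_of_injective _ hinj, compl_eq_univ_sdiff]

lemma sum_prob_mul_min_card_eq_eMinBer {n m k j : ℕ} {p : ℕ → ℕ → ℝ} (hj : j ≤ m)
    (hps : ∀ i ∈ Icc 1 n, ∑ j ∈ Icc 1 m, p i j = 1) :
    ∑ t ∈ Fintype.piFinset (fun _ : Fin n => Icc 1 m),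
        (∏ i : Fin n, p (i.1 + 1) (t i)) * min (#{i | t i ≤ j} : ℝ) k =
      eMinBer (fun i => ∑ j' ∈ Icc 1 j, p i j') n k := by
  have hlow : {j' ∈ Icc 1 m | j' ≤ j} = Icc 1 j := by
    ext j'
    simp only [mem_filter, mem_Icc]
    omega
  have hhigh : ∀ i : Fin n, ∑ j' ∈ Icc 1 m with ¬j' ≤ j, p (i.1 + 1) j' =
      1 - ∑ j' ∈ Icc 1 j, p (i.1 + 1) j' := by
    intro i
    have hsplit := sum_filter_add_sum_filter_not (Icc 1 m) (· ≤ j) (p (i.1 + 1))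
    rw [hlow, hps (i.1 + 1) (mem_Icc.2 ⟨by omega, by omega⟩)] at hsplit
    linarith
  rw [sum_piFinset_prod_mul_eq_sum_finset (ι := Fin n) _ (· ≤ j) (fun i => p (i.1 + 1))
    (fun T => min (#T : ℝ) k), eMinBer_eq_sum_finset]
  simp only [hlow, hhigh]

theorem Proph_eq_sum_valGap_mul_eMinBer {k n m : ℕ} {r : ℕ → ℝ} {p : ℕ → ℕ → ℝ}
    (hr : ∀ j, 1 ≤ j → j < m → r (j + 1) ≤ r j) (hrm : 0 ≤ r m)
    (hps : ∀ i ∈ Icc 1 n, ∑ j ∈ Icc 1 m, p i j = 1) :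
    Proph k n m r p =
      ∑ j ∈ Icc 1 m, valGap m r j * eMinBer (fun i => ∑ j' ∈ Icc 1 j, p i j') n k := by
  rw [Proph, sum_congr rfl fun t ht => by
    rw [prophVal_eq_sum_valGap hr hrm t (Fintype.mem_piFinset.1 ht), mul_sum], sum_comm]
  refine sum_congr rfl fun j hj => ?_
  rw [← sum_prob_mul_min_card_eq_eMinBer (mem_Icc.1 hj).2 hps, mul_sum]
  exact sum_congr rfl fun t _ => mul_left_comm _ _ _

theorem ExAnte_eq_sum_valGap_mul_min {k n m : ℕ} {r : ℕ → ℝ} {p : ℕ → ℕ → ℝ}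
    (hr : ∀ j, 1 ≤ j → j < m → r (j + 1) ≤ r j) (hrm : 0 ≤ r m)
    (hp : ∀ i ∈ Icc 1 n, ∀ j ∈ Icc 1 m, 0 ≤ p i j) :
    ExAnte k n m r p =
      ∑ j ∈ Icc 1 m, valGap m r j * min (∑ i ∈ Icc 1 n, ∑ j' ∈ Icc 1 j, p i j') k := by
  set S : ℕ → ℝ := fun j => ∑ i ∈ Icc 1 n, ∑ j' ∈ Icc 1 j, p i j'
  set M : ℕ → ℝ := fun j => min (S j) k
  have hS_succ : ∀ j, S (j + 1) = S j + ∑ i ∈ Icc 1 n, p i (j + 1) := fun j => by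
    simp only [S, sum_Icc_succ_top (Nat.le_add_left 1 j), sum_add_distrib]
  have hsumM : ∀ b, ∑ j ∈ Icc 1 b, (M j - M (j - 1)) = M b := by
    intro b
    induction b with
    | zero => simp [M, S]
    | succ b ih => rw [sum_Icc_succ_top (by omega), ih, Nat.add_sub_cancel, add_sub_cancel]
  -- The greedy allocation, whose mass on the types `≤ j` is `M j`.
  refine IsGreatest.csSup_eq ⟨⟨fun j => M j - M (j - 1), fun j hj => ?_, ?_, ?_⟩, ?_⟩
  · obtain ⟨j, rfl⟩ : ∃ j', j = j' + 1 := ⟨j - 1, by grind⟩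
    have hpj : 0 ≤ ∑ i ∈ Icc 1 n, p i (j + 1) := sum_nonneg fun i hi => hp i hi _ hj
    simp only [M, hS_succ, Nat.add_sub_cancel]
    constructor
    · linarith [min_le_min_right (k : ℝ) (le_add_of_nonneg_right hpj : S j ≤ _)]
    · linarith [(min_le_min_left _ (le_add_of_nonneg_right hpj)).trans_eq
        (min_add_add_right (S j) k _)]
  · exact (hsumM m).le.trans (min_le_right _ _)
  · rw [sum_mul_eq_sum_valGap_mul_sum_Icc (r := r)]
    exact sum_congr rfl fun j _ => by rw [hsumM j]
  · rintro s ⟨a, ha, hak, rfl⟩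
    rw [sum_mul_eq_sum_valGap_mul_sum_Icc (r := r)]
    refine sum_le_sum fun j hj => mul_le_mul_of_nonneg_left ?_ (valGap_nonneg hr hrm hj)
    have hjm := (mem_Icc.1 hj).2
    refine le_min ?_ ?_
    · rw [sum_comm]
      exact sum_le_sum fun j' hj' => (ha j' (Icc_subset_Icc_right hjm hj')).2
    · exact (sum_le_sum_of_subset_of_nonneg (Icc_subset_Icc_right hjm)
        fun j' hj' _ => (ha j' hj').1).trans hak

theorem stmt1_general (k n m : ℕ)
    (r : ℕ → ℝ) (p : ℕ → ℕ → ℝ)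
    (hr : ∀ j, 1 ≤ j → j < m → r (j+1) ≤ r j) (hrm : 0 ≤ r m)
    (hp : ∀ i ∈ Finset.Icc 1 n, ∀ j ∈ Finset.Icc 1 m, 0 ≤ p i j)
    (hps : ∀ i ∈ Finset.Icc 1 n, ∑ j ∈ Finset.Icc 1 m, p i j = 1) :
    Proph k n m r p =
      ∑ j ∈ Finset.Icc 1 m, (r j - (if j < m then r (j+1) else 0)) *
        eMinBer (fun i => ∑ j' ∈ Finset.Icc 1 j, p i j') n k ∧
    ExAnte k n m r p =
      ∑ j ∈ Finset.Icc 1 m, (r j - (if j < m then r (j+1) else 0)) *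
        min (∑ i ∈ Finset.Icc 1 n, ∑ j' ∈ Finset.Icc 1 j, p i j') (k : ℝ) :=
  ⟨Proph_eq_sum_valGap_mul_eMinBer hr hrm hps, ExAnte_eq_sum_valGap_mul_min hr hrm hp⟩

/-- For any instance,
`Proph(I) = Σ_j Δ_j · E[min{Σ_i Ber(G_{ij}), k}]` and
`ExAnte(I) = Σ_j Δ_j · min{Σ_i G_{ij}, k}`,
where `G_{ij} = Σ_{j'≤j} p_{ij'}` and `Δ_j = r_j - r_{j+1}` (with `r_{m+1} = 0`). -/
theorem stmt1 (k n m : ℕ) (hk : 1 ≤ k) (hn : 1 ≤ n) (hm : 1 ≤ m)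
    (r : ℕ → ℝ) (p : ℕ → ℕ → ℝ)
    (hr : ∀ j, 1 ≤ j → j < m → r (j+1) ≤ r j) (hrm : 0 ≤ r m)
    (hp : ∀ i ∈ Finset.Icc 1 n, ∀ j ∈ Finset.Icc 1 m, 0 ≤ p i j)
    (hps : ∀ i ∈ Finset.Icc 1 n, ∑ j ∈ Finset.Icc 1 m, p i j = 1) :
    Proph k n m r p =
      ∑ j ∈ Finset.Icc 1 m, (r j - (if j < m then r (j+1) else 0)) *
        eMinBer (fun i => ∑ j' ∈ Finset.Icc 1 j, p i j') n k ∧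
    ExAnte k n m r p =
      ∑ j ∈ Finset.Icc 1 m, (r j - (if j < m then r (j+1) else 0)) *
        min (∑ i ∈ Finset.Icc 1 n, ∑ j' ∈ Finset.Icc 1 j, p i j') (k : ℝ) :=
  stmt1_general k n m r p hr hrm hp hps
end

section
/- Fix positive integers k, n, m, type distributions G over m types for n agents, and nonnegative reals Q_1, ..., Q_m. Define V1 := sup{θ : there exist reals x_i^l (i ∈ {1,...,n}, l ∈ {1,...,k}) and y_{ij}^l ≥ 0 (i ∈ {1,...,n}, j ∈ {1,...,m}, l ∈ {1,...,k}) such that (i) θ·Q_j ≤ Σ_{i=1}^n Σ_{l=1}^k Σ_{j'=1}^j y_{ij'}^l for all j; (ii) y_{ij}^l ≤ p_{ij}·x_i^l for all i, j, l; (iii) x_1^k = 1, x_1^l = 0 for l < k, and x_i^l = x_{i-1}^l - Σ_{j=1}^m (y_{i-1,j}^l - y_{i-1,j}^{l+1}) for i > 1 (with the convention y_{i-1,j}^{k+1} := 0)}. Define V2 := sup{θ : there exists (x,y) ∈ P(k,n) with θ·Q_j ≤ Σ_{i=1}^n Σ_{l=1}^k min{y_i^l, G_{ij}·x_i^l} for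 all j ∈ {1,...,m}}. Then V1 = V2. -/
open Finset

/-- The polytope `P(k,n)` of state/acceptance probability vectors. -/
def memP (k n : ℕ) (x y : ℕ → ℕ → ℝ) : Prop :=
  x 1 k = 1 ∧
  (∀ l, 1 ≤ l → l < k → x 1 l = 0) ∧
  (∀ i ∈ Finset.Icc 2 n, ∀ l ∈ Finset.Icc 1 k,
    x i l = x (i-1) l - y (i-1) l + (if l < k then y (i-1) (l+1) else 0)) ∧
  (∀ i ∈ Finset.Icc 1 n, ∀ l ∈ Finset.Icc 1 k, 0 ≤ y i l ∧ y i l ≤ x i l)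

/-- `G` is a valid family of type distributions over `m` types for `n` agents. -/
def IsTypeDist (n m : ℕ) (G : ℕ → ℕ → ℝ) : Prop :=
  ∀ i ∈ Finset.Icc 1 n, G i 0 = 0 ∧ G i m = 1 ∧ ∀ j ∈ Finset.Icc 1 m, G i (j-1) ≤ G i j

/-- Optimal value `V1` of the (unsimplified) dual LP. -/
noncomputable def V1 (k n m : ℕ) (G : ℕ → ℕ → ℝ) (Q : ℕ → ℝ) : ℝ :=
  sSup {θ : ℝ | ∃ (x : ℕ → ℕ → ℝ) (Y : ℕ → ℕ → ℕ → ℝ),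
    (∀ i ∈ Finset.Icc 1 n, ∀ j ∈ Finset.Icc 1 m, ∀ l ∈ Finset.Icc 1 k, 0 ≤ Y i j l) ∧
    (∀ j ∈ Finset.Icc 1 m,
      θ * Q j ≤ ∑ i ∈ Finset.Icc 1 n, ∑ l ∈ Finset.Icc 1 k, ∑ j' ∈ Finset.Icc 1 j, Y i j' l) ∧
    (∀ i ∈ Finset.Icc 1 n, ∀ j ∈ Finset.Icc 1 m, ∀ l ∈ Finset.Icc 1 k,
      Y i j l ≤ (G i j - G i (j-1)) * x i l) ∧
    x 1 k = 1 ∧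
    (∀ l, 1 ≤ l → l < k → x 1 l = 0) ∧
    (∀ i ∈ Finset.Icc 2 n, ∀ l ∈ Finset.Icc 1 k,
      x i l = x (i-1) l - ∑ j ∈ Finset.Icc 1 m,
        (Y (i-1) j l - (if l < k then Y (i-1) j (l+1) else 0)))}

/-- Optimal value `V2` of the simplified dual LP. -/
noncomputable def V2 (k n m : ℕ) (G : ℕ → ℕ → ℝ) (Q : ℕ → ℝ) : ℝ :=
  sSup {θ : ℝ | ∃ x y, memP k n x y ∧
    ∀ j ∈ Finset.Icc 1 m,
      θ * Q j ≤ ∑ i ∈ Finset.Icc 1 n, ∑ l ∈ Finset.Icc 1 k, min (y i l) (G i j * x i l)}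

/-- Telescoping sums over `Icc 1 j`. -/
lemma telescope_aux (f : ℕ → ℝ) (j : ℕ) :
    ∑ j' ∈ Finset.Icc 1 j, (f j' - f (j'-1)) = f j - f 0 := by
  induction j with
  | zero => simp
  | succ j ih =>
      rw [Finset.sum_Icc_succ_top (by omega : 1 ≤ j + 1), ih]
      simp only [Nat.add_sub_cancel]
      ring

lemma min_sub_min_le (a b c : ℝ) (hbc : b ≤ c) : min a c - min a b ≤ c - b := by
  rcases le_total a b with h | h
  · rw [min_eq_left h, min_eq_left (h.trans hbc)]; linarith
  · rw [min_eq_right h]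
    have := min_le_right a c
    linarith

/-- Dual simplification: `V1 = V2`. -/
theorem stmt2 (k n m : ℕ) (hk : 1 ≤ k) (hn : 1 ≤ n) (hm : 1 ≤ m)
    (G : ℕ → ℕ → ℝ) (hG : IsTypeDist n m G)
    (Q : ℕ → ℝ) (hQ : ∀ j ∈ Finset.Icc 1 m, 0 ≤ Q j) :
    V1 k n m G Q = V2 k n m G Q := by
  unfold V1 V2
  congr 1
  ext θ
  simp only [Set.mem_setOf_eq]
  constructor
  · -- V1 feasible → V2 feasible
    rintro ⟨x, Y, hY0, hQle, hYle, hx1k, hx1l, hxtrans⟩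
    refine ⟨x, fun i l => ∑ j ∈ Finset.Icc 1 m, Y i j l, ⟨hx1k, hx1l, ?_, ?_⟩, ?_⟩
    · -- transition
      intro i hi l hl
      rw [hxtrans i hi l hl, Finset.sum_sub_distrib]
      have : ∑ j ∈ Finset.Icc 1 m, (if l < k then Y (i-1) j (l+1) else 0)
          = if l < k then ∑ j ∈ Finset.Icc 1 m, Y (i-1) j (l+1) else 0 := by
        split <;> simp
      rw [this]; ring
    · -- 0 ≤ y ≤ x
      intro i hi l hl
      constructor
      · exact Finset.sum_nonneg fun j hj => hY0 i hi j hj l hl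
      · calc ∑ j ∈ Finset.Icc 1 m, Y i j l
            ≤ ∑ j ∈ Finset.Icc 1 m, (G i j - G i (j-1)) * x i l :=
              Finset.sum_le_sum fun j hj => hYle i hi j hj l hl
          _ = (G i m - G i 0) * x i l := by rw [← Finset.sum_mul, telescope_aux (G i) m]
          _ = x i l := by
              obtain ⟨h0, h1, _⟩ := hG i hi
              rw [h0, h1]; ring
    · -- Q constraint
      intro j hj
      simp only [Finset.mem_Icc] at hj
      refine (hQle j (by simp [hj])).trans (Finset.sum_le_sum fun i hi =>
        Finset.sum_le_sum fun l hl => le_min ?_ ?_)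
      · exact Finset.sum_le_sum_of_subset_of_nonneg
          (Finset.Icc_subset_Icc le_rfl hj.2)
          (fun j' hj' _ => hY0 i hi j' hj' l hl)
      · calc ∑ j' ∈ Finset.Icc 1 j, Y i j' l
            ≤ ∑ j' ∈ Finset.Icc 1 j, (G i j' - G i (j'-1)) * x i l :=
              Finset.sum_le_sum fun j' hj' => by
                refine hYle i hi j' ?_ l hl
                simp only [Finset.mem_Icc] at hj' ⊢
                omega
          _ = (G i j - G i 0) * x i l := by rw [← Finset.sum_mul, telescope_aux (G i) j]
          _ = G i j * x i l := by
              obtain ⟨h0, _, _⟩ := hG i hi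
              rw [h0]; ring
  · -- V2 feasible → V1 feasible
    rintro ⟨x, y, ⟨hx1k, hx1l, hxtrans, hy⟩, hQle⟩
    set Y : ℕ → ℕ → ℕ → ℝ :=
      fun i j l => min (y i l) (G i j * x i l) - min (y i l) (G i (j-1) * x i l) with hYdef
    have hx0 : ∀ i ∈ Finset.Icc 1 n, ∀ l ∈ Finset.Icc 1 k, 0 ≤ x i l :=
      fun i hi l hl => (hy i hi l hl).1.trans (hy i hi l hl).2
    have hsumY : ∀ i ∈ Finset.Icc 1 n, ∀ l ∈ Finset.Icc 1 k, ∀ j,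
        ∑ j' ∈ Finset.Icc 1 j, Y i j' l = min (y i l) (G i j * x i l) := by
      intro i hi l hl j
      rw [telescope_aux (fun j' => min (y i l) (G i j' * x i l)) j]
      obtain ⟨h0, _, _⟩ := hG i hi
      rw [h0, zero_mul, min_eq_right (hy i hi l hl).1]
      ring
    have hfullY : ∀ i ∈ Finset.Icc 1 n, ∀ l ∈ Finset.Icc 1 k,
        ∑ j' ∈ Finset.Icc 1 m, Y i j' l = y i l := by
      intro i hi l hl
      rw [hsumY i hi l hl m]
      obtain ⟨_, h1, _⟩ := hG i hi
      rw [h1, one_mul, min_eq_left (hy i hi l hl).2]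
    refine ⟨x, Y, ?_, ?_, ?_, hx1k, hx1l, ?_⟩
    · -- Y ≥ 0
      intro i hi j hj l hl
      obtain ⟨_, _, hmono⟩ := hG i hi
      have : G i (j-1) * x i l ≤ G i j * x i l :=
        mul_le_mul_of_nonneg_right (hmono j hj) (hx0 i hi l hl)
      exact sub_nonneg.mpr (min_le_min le_rfl this)
    · -- Q constraint
      intro j hj
      refine (hQle j hj).trans (le_of_eq ?_)
      refine Finset.sum_congr rfl fun i hi => Finset.sum_congr rfl fun l hl => ?_
      exact (hsumY i hi l hl j).symm
    · -- Y ≤ p * x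
      intro i hi j hj l hl
      obtain ⟨_, _, hmono⟩ := hG i hi
      have hbc : G i (j-1) * x i l ≤ G i j * x i l :=
        mul_le_mul_of_nonneg_right (hmono j hj) (hx0 i hi l hl)
      have := min_sub_min_le (y i l) (G i (j-1) * x i l) (G i j * x i l) hbc
      calc Y i j l ≤ G i j * x i l - G i (j-1) * x i l := this
        _ = (G i j - G i (j-1)) * x i l := by ring
    · -- transition
      intro i hi l hl
      simp only [Finset.mem_Icc] at hi
      have hi1 : i - 1 ∈ Finset.Icc 1 n := by simp only [Finset.mem_Icc]; omega
      rw [Finset.sum_sub_distrib]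
      have h2 : ∑ j ∈ Finset.Icc 1 m, (if l < k then Y (i-1) j (l+1) else 0)
          = if l < k then y (i-1) (l+1) else 0 := by
        split
        · next h =>
            refine hfullY (i-1) hi1 (l+1) ?_
            simp only [Finset.mem_Icc] at hl ⊢
            omega
        · simp
      rw [h2, hfullY (i-1) hi1 l hl, hxtrans i (by simp only [Finset.mem_Icc]; omega) l hl]
      ring
end

section
/- Fix integers k ≥ 1 and n > k. Then the infimum over all m ≥ 1 and type distributions G over m types for n agents, of the supremum over J ∈ {1,...,m} and ρ ∈ (0,1], of the infimum over all valuations r_1 ≥ ... ≥ r_m ≥ 0 with Proph(I) > 0 (where I is the instance determined by G and r) of OST_{J,ρ}(I)/Proph(I), equals inf over m and G of sup over J, ρ of innerLP^{OST(J,ρ)/Proph}_{k,n}(G); and the analogous statement holds with ExAnte(I) in place of Proph(I) and innerLP^{OST(J,ρ)/ExAnte}_{k,n}(G) in place of innerLP^{OST(J,ρ)/Proph}_{k,n}(G). -/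
open Finset

noncomputable def QProph (k n : ℕ) (G : ℕ → ℕ → ℝ) (j : ℕ) : ℝ :=
  eMinBer (fun i => G i j) n k

noncomputable def QExAnte (k n : ℕ) (G : ℕ → ℕ → ℝ) (j : ℕ) : ℝ :=
  min (∑ i ∈ Finset.Icc 1 n, G i j) (k : ℝ)

noncomputable def coverSum (k n : ℕ) (G : ℕ → ℕ → ℝ) (j : ℕ) (x y : ℕ → ℕ → ℝ) : ℝ :=
  ∑ i ∈ Finset.Icc 1 n, ∑ l ∈ Finset.Icc 1 k, min (y i l) (G i j * x i l)

/-- `τ_i(J,ρ)`. -/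
noncomputable def tauOf (G : ℕ → ℕ → ℝ) (J : ℕ) (ρ : ℝ) (i : ℕ) : ℝ :=
  (1 - ρ) * G i (J-1) + ρ * G i J

/-- The simplified dual LP `innerLP^{OST(J,ρ)/·}_{k,n}(G)` with coefficients `Q`. -/
noncomputable def innerLP_OST (k n m : ℕ) (G : ℕ → ℕ → ℝ) (J : ℕ) (ρ : ℝ) (Q : ℕ → ℝ) : ℝ :=
  sSup {θ : ℝ | ∃ x y, memP k n x y ∧
    (∀ i ∈ Finset.Icc 1 n, ∀ l ∈ Finset.Icc 1 k, y i l = tauOf G J ρ i * x i l) ∧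
    ∀ j ∈ Finset.Icc 1 m, θ * Q j ≤ coverSum k n G j x y}

/-- Static threshold policy value-to-go: `ostW n m J ρ r p d l = W_{n+1-d}^l`, i.e.
`W_{n+1}^l = 0`, `W_i^0 = 0`, and
`W_i^l = W_{i+1}^l + Σ_{j<J} p_{ij}(r_j - (W_{i+1}^l - W_{i+1}^{l-1}))
       + ρ·p_{iJ}(r_J - (W_{i+1}^l - W_{i+1}^{l-1}))`. -/
noncomputable def ostW (n m J : ℕ) (ρ : ℝ) (r : ℕ → ℝ) (p : ℕ → ℕ → ℝ) : ℕ → ℕ → ℝ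
  | 0 => fun _ => 0
  | (d+1) => fun l =>
      if l = 0 then 0 else
        ostW n m J ρ r p d l
          + (∑ j ∈ Finset.Icc 1 (J-1),
              p (n - d) j * (r j - (ostW n m J ρ r p d l - ostW n m J ρ r p d (l-1))))
          + ρ * p (n - d) J * (r J - (ostW n m J ρ r p d l - ostW n m J ρ r p d (l-1)))

/-- `OST_{J,ρ}(I) = W_1^k`. -/
noncomputable def OSTval (k n m J : ℕ) (ρ : ℝ) (r : ℕ → ℝ) (p : ℕ → ℕ → ℝ) : ℝ :=
  ostW n m J ρ r p n k

/-- Valuations `r` are admissible for `m` types: `r_1 ≥ ... ≥ r_m ≥ 0`. -/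
def IsValuation (m : ℕ) (r : ℕ → ℝ) : Prop :=
  (∀ j, 1 ≤ j → j < m → r (j+1) ≤ r j) ∧ 0 ≤ r m

/-- Probabilities from a type-distribution family. -/
def pOf (G : ℕ → ℕ → ℝ) (i j : ℕ) : ℝ := G i j - G i (j-1)

/-!
Every admissible valuation is a nonnegative combination of step valuations,
`r = ∑ⱼ (r_j - r_{j+1}) 𝟙_{[1,j]}`, and all three quantities involved are linear in these layer
coefficients: `Proph(r) = ∑ⱼ cⱼ Q^Proph_j`, `ExAnte(r) = ∑ⱼ cⱼ Q^ExAnte_j` (the prophet keeps the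
`min(#{i : type ≤ j}, k)` best agents of each layer, the ex-ante relaxation fills the layers
greedily), and `OST_{J,ρ}(r) = ∑ⱼ cⱼ Vⱼ`, where `Vⱼ` is the coverage of types `≤ j` at the
slot distribution `x` of the static policy, i.e. at the point of `P(k,n)` with `y = τ x`
(backward induction on the value-to-go `W`). That point is the only feasible one of the inner LP,
whose value is therefore `sup {θ | θ Qⱼ ≤ Vⱼ ∀ j}`. On the other hand a ratio of two nonnegative
linear forms in `c ≥ 0` is minimized on a single layer, so the worst case of `OST/Proph` (resp.
`OST/ExAnte`) over valuations is `minⱼ Vⱼ / Qⱼ`, the same number.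
-/

lemma Icc_one_eq_Ioc_zero (b : ℕ) : Icc 1 b = Ioc 0 b :=
  Icc_add_one_left_eq_Ioc 0 b

lemma sum_Ioc_sub_pred (f : ℕ → ℝ) {a b : ℕ} (hab : a ≤ b) :
    ∑ j ∈ Ioc a b, (f j - f (j - 1)) = f b - f a := by
  induction b, hab using Nat.le_induction with
  | base => simp
  | succ b hab ih => rw [sum_Ioc_succ_top hab, ih, Nat.add_sub_cancel]; ring

lemma sum_Icc_mul_pred (x w : ℕ → ℝ) (hw : w 0 = 0) (k : ℕ) :
    ∑ l ∈ Icc 1 k, x l * w (l - 1) = ∑ l ∈ Icc 1 k, (if l < k then x (l + 1) else 0) * w l := by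
  have hshift : ∀ k, ∑ l ∈ Icc 1 k, x l * w (l - 1) = ∑ l ∈ range k, x (l + 1) * w l := by
    intro k
    induction k with
    | zero => simp
    | succ k ih => rw [sum_Icc_succ_top (by omega), ih, sum_range_succ, Nat.add_sub_cancel]
  have hzero : ∑ l ∈ range (k + 1), (if l < k then x (l + 1) else 0) * w l
      = ∑ l ∈ Icc 1 k, (if l < k then x (l + 1) else 0) * w l := by
    rw [range_eq_Ico, sum_eq_sum_Ico_succ_bot (by omega), hw, mul_zero, zero_add]
    rfl
  rw [hshift, ← hzero, sum_range_succ, if_neg (lt_irrefl k), zero_mul, add_zero]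
  exact sum_congr rfl fun l hl => by rw [if_pos (mem_range.1 hl)]

section TypeDist

variable {n m : ℕ} {G : ℕ → ℕ → ℝ} {i : ℕ}

lemma sum_pOf_Ioc (G : ℕ → ℕ → ℝ) (i : ℕ) {a b : ℕ} (hab : a ≤ b) :
    ∑ j ∈ Ioc a b, pOf G i j = G i b - G i a :=
  sum_Ioc_sub_pred (G i) hab

namespace IsTypeDist

lemma mono (hG : IsTypeDist n m G) (hi : i ∈ Icc 1 n) {a b : ℕ} (hab : a ≤ b) (hb : b ≤ m) :
    G i a ≤ G i b := by
  induction b, hab using Nat.le_induction with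
  | base => rfl
  | succ b hab ih =>
    exact (ih (by omega)).trans (by simpa using (hG i hi).2.2 (b + 1) (by simp; omega))

lemma nonneg (hG : IsTypeDist n m G) (hi : i ∈ Icc 1 n) {j : ℕ} (hj : j ≤ m) : 0 ≤ G i j :=
  (hG i hi).1 ▸ hG.mono hi (Nat.zero_le j) hj

lemma le_one (hG : IsTypeDist n m G) (hi : i ∈ Icc 1 n) {j : ℕ} (hj : j ≤ m) : G i j ≤ 1 :=
  (hG i hi).2.1 ▸ hG.mono hi hj le_rfl

lemma sum_pOf_Icc (hG : IsTypeDist n m G) (hi : i ∈ Icc 1 n) (b : ℕ) :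
    ∑ j ∈ Icc 1 b, pOf G i j = G i b := by
  rw [Icc_one_eq_Ioc_zero, sum_pOf_Ioc G i (Nat.zero_le b), (hG i hi).1, sub_zero]

lemma sum_pOf_Ioc_last (hG : IsTypeDist n m G) (hi : i ∈ Icc 1 n) {a : ℕ} (ha : a ≤ m) :
    ∑ j ∈ Ioc a m, pOf G i j = 1 - G i a := by
  rw [sum_pOf_Ioc G i ha, (hG i hi).2.1]

variable {J : ℕ} {ρ : ℝ}

lemma le_tauOf (hG : IsTypeDist n m G) (hi : i ∈ Icc 1 n) (hJ : J ∈ Icc 1 m) (hρ0 : 0 ≤ ρ) :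
    G i (J - 1) ≤ tauOf G J ρ i := by
  have := (hG i hi).2.2 J hJ
  unfold tauOf; nlinarith

lemma tauOf_le (hG : IsTypeDist n m G) (hi : i ∈ Icc 1 n) (hJ : J ∈ Icc 1 m) (hρ1 : ρ ≤ 1) :
    tauOf G J ρ i ≤ G i J := by
  have := (hG i hi).2.2 J hJ
  unfold tauOf; nlinarith

lemma tauOf_mem_Icc (hG : IsTypeDist n m G) (hi : i ∈ Icc 1 n) (hJ : J ∈ Icc 1 m)
    (hρ0 : 0 ≤ ρ) (hρ1 : ρ ≤ 1) : tauOf G J ρ i ∈ Set.Icc 0 1 :=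
  ⟨(hG.nonneg hi (by grind)).trans (hG.le_tauOf hi hJ hρ0),
    (hG.tauOf_le hi hJ hρ1).trans (hG.le_one hi (mem_Icc.1 hJ).2)⟩

lemma sum_pOf_add_mul_pOf (hG : IsTypeDist n m G) (hi : i ∈ Icc 1 n) (J : ℕ) (ρ : ℝ) :
    ∑ j ∈ Icc 1 (J - 1), pOf G i j + ρ * pOf G i J = tauOf G J ρ i := by
  rw [hG.sum_pOf_Icc hi, pOf, tauOf]
  ring

end IsTypeDist

end TypeDist

section Layers

variable {m : ℕ} {r : ℕ → ℝ}

def layerCoeff (m : ℕ) (r : ℕ → ℝ) (j : ℕ) : ℝ :=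
  r j - if j < m then r (j + 1) else 0

def stepValuation (j₀ : ℕ) (j : ℕ) : ℝ :=
  if j ≤ j₀ then 1 else 0

lemma sum_layerCoeff_Icc (r : ℕ → ℝ) {a : ℕ} (ha : a ≤ m) :
    ∑ j ∈ Icc a m, layerCoeff m r j = r a := by
  set g : ℕ → ℝ := fun j => if j ≤ m then r j else 0
  have hg : ∀ j ∈ Icc a m, layerCoeff m r j = -(g (j + 1) - g j) := by
    intro j hj
    have hjm := (mem_Icc.1 hj).2
    by_cases h : j < m
    · simp [g, layerCoeff, h, hjm, Nat.succ_le_of_lt h]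
    · simp [g, layerCoeff, h, hjm]
  rw [sum_congr rfl hg, sum_neg_distrib, sum_Icc_sub ha]
  simp [g, ha]

lemma sum_layerCoeff_mul_stepValuation (r : ℕ → ℝ) {a : ℕ} (ha : a ∈ Icc 1 m) :
    ∑ j ∈ Icc 1 m, layerCoeff m r j * stepValuation j a = r a := by
  obtain ⟨ha1, ham⟩ := mem_Icc.1 ha
  simp only [stepValuation, mul_ite, mul_one, mul_zero]
  rw [← sum_filter, ← sum_layerCoeff_Icc r ham]
  congr 1
  ext j
  simp only [mem_filter, mem_Icc]
  omega

lemma IsValuation.layerCoeff_nonneg (hr : IsValuation m r) {j : ℕ} (hj : j ∈ Icc 1 m) :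
    0 ≤ layerCoeff m r j := by
  obtain ⟨hj1, hjm⟩ := mem_Icc.1 hj
  rcases hjm.lt_or_eq with h | rfl
  · simpa [layerCoeff, h] using hr.1 j hj1 h
  · simpa [layerCoeff] using hr.2

lemma isValuation_stepValuation (j₀ : ℕ) : IsValuation m (stepValuation j₀) := by
  refine ⟨fun j _ _ => ?_, ?_⟩ <;> unfold stepValuation <;> split_ifs <;> first | omega | norm_num

lemma layerCoeff_stepValuation {j₀ j : ℕ} (hj₀ : j₀ ∈ Icc 1 m) (hj : j ∈ Icc 1 m) :
    layerCoeff m (stepValuation j₀) j = if j = j₀ then 1 else 0 := by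
  simp only [mem_Icc] at hj₀ hj
  unfold layerCoeff stepValuation
  split_ifs <;> first | omega | norm_num

end Layers

lemma sInf_ratio_eq_sSup {α ι : Type*} [DecidableEq ι] {s : Finset ι} {P : α → Prop}
    {c : α → ι → ℝ} {N D : α → ℝ} {V Q : ι → ℝ}
    (hc : ∀ a, P a → ∀ j ∈ s, 0 ≤ c a j)
    (hN : ∀ a, P a → N a = ∑ j ∈ s, c a j * V j)
    (hD : ∀ a, P a → D a = ∑ j ∈ s, c a j * Q j)
    {e : ι → α} (he : ∀ j ∈ s, P (e j))
    (hce : ∀ j ∈ s, ∀ j' ∈ s, c (e j) j' = if j' = j then 1 else 0)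
    (hV : ∀ j ∈ s, 0 ≤ V j) (hQ : ∀ j ∈ s, 0 ≤ Q j) {j₀ : ι} (hj₀ : j₀ ∈ s) (hQj₀ : 0 < Q j₀) :
    sInf {u | ∃ a, P a ∧ 0 < D a ∧ u = N a / D a} = sSup {θ | ∀ j ∈ s, θ * Q j ≤ V j} := by
  set A := {u | ∃ a, P a ∧ 0 < D a ∧ u = N a / D a}
  set B := {θ | ∀ j ∈ s, θ * Q j ≤ V j}
  have heval : ∀ f : ι → ℝ, ∀ j ∈ s, ∑ j' ∈ s, c (e j) j' * f j' = f j := fun f j hj => by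
    rw [sum_congr rfl fun j' hj' => by rw [hce j hj j' hj']]
    simp [hj]
  have hA_mem : ∀ j ∈ s, 0 < Q j → V j / Q j ∈ A := fun j hj hQj =>
    ⟨e j, he j hj, by rwa [hD _ (he j hj), heval Q j hj], by
      rw [hN _ (he j hj), hD _ (he j hj), heval V j hj, heval Q j hj]⟩
  have hA_bdd : BddBelow A := ⟨0, by
    rintro u ⟨a, ha, hDa, rfl⟩
    rw [hN a ha]
    exact div_nonneg (sum_nonneg fun j hj => mul_nonneg (hc a ha j hj) (hV j hj)) hDa.le⟩
  have hle : ∀ θ ∈ B, ∀ u ∈ A, θ ≤ u := by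
    rintro θ hθ u ⟨a, ha, hDa, rfl⟩
    rw [le_div_iff₀ hDa, hD a ha, hN a ha, mul_sum]
    refine sum_le_sum fun j hj => ?_
    rw [mul_left_comm]
    exact mul_le_mul_of_nonneg_left (hθ j hj) (hc a ha j hj)
  have hInf_mem : sInf A ∈ B := by
    intro j hj
    rcases (hQ j hj).lt_or_eq with hQj | hQj
    · exact (le_div_iff₀ hQj).1 (csInf_le hA_bdd (hA_mem j hj hQj))
    · simpa [← hQj] using hV j hj
  have hB_bdd : BddAbove B := ⟨V j₀ / Q j₀, fun θ hθ => (le_div_iff₀ hQj₀).2 (hθ j₀ hj₀)⟩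
  exact le_antisymm (le_csSup hB_bdd hInf_mem)
    (csSup_le ⟨_, hInf_mem⟩ fun θ hθ => le_csInf ⟨_, hA_mem j₀ hj₀ hQj₀⟩ (hle θ hθ))

/-- `slotProb τ k i l` is the probability that exactly `l` of the `k` slots are still free when
agent `i` arrives, if every agent `i'` is accepted with probability `τ i'` while a slot is free. -/
def slotProb (τ : ℕ → ℝ) (k : ℕ) : ℕ → ℕ → ℝ
  | 0, l | 1, l => if l = k then 1 else 0
  | i + 2, l => (1 - τ (i + 1)) * slotProb τ k (i + 1) l
      + τ (i + 1) * if l < k then slotProb τ k (i + 1) (l + 1) else 0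

section SlotProb

variable {n k : ℕ} {τ : ℕ → ℝ}

lemma slotProb_one (k l : ℕ) : slotProb τ k 1 l = if l = k then 1 else 0 := by
  rw [slotProb]

lemma slotProb_succ {i : ℕ} (hi : 1 ≤ i) (l : ℕ) :
    slotProb τ k (i + 1) l = (1 - τ i) * slotProb τ k i l
      + τ i * if l < k then slotProb τ k i (l + 1) else 0 := by
  obtain ⟨i, rfl⟩ := Nat.exists_eq_add_of_le' hi
  rw [slotProb]

lemma slotProb_nonneg (hτ : ∀ i ∈ Icc 1 n, τ i ∈ Set.Icc 0 1) {i : ℕ} (hi : i ≤ n) (l : ℕ) :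
    0 ≤ slotProb τ k i l := by
  induction i generalizing l with
  | zero => rw [slotProb]; positivity
  | succ i ih =>
    rcases i.eq_zero_or_pos with rfl | hi1
    · rw [slotProb_one]; positivity
    · obtain ⟨h0, h1⟩ := hτ i (mem_Icc.2 ⟨hi1, by omega⟩)
      have hprev := ih (by omega)
      rw [slotProb_succ hi1]
      refine add_nonneg (mul_nonneg (by linarith) (hprev l)) (mul_nonneg h0 ?_)
      split_ifs
      exacts [hprev _, le_rfl]

lemma memP_slotProb (hτ : ∀ i ∈ Icc 1 n, τ i ∈ Set.Icc 0 1) :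
    memP k n (slotProb τ k) (fun i l => τ i * slotProb τ k i l) := by
  refine ⟨by simp [slotProb_one], fun l _ hl => by simp [slotProb_one, hl.ne], ?_, ?_⟩
  · intro i hi l _
    obtain ⟨i, rfl⟩ := Nat.exists_eq_add_of_le' (mem_Icc.1 hi).1
    dsimp only
    rw [show i + 2 - 1 = i + 1 by omega, slotProb_succ (by omega)]
    split_ifs <;> ring
  · intro i hi l _
    obtain ⟨h0, h1⟩ := hτ i hi
    have hx := slotProb_nonneg hτ (mem_Icc.1 hi).2 l (k := k)
    exact ⟨mul_nonneg h0 hx, mul_le_of_le_one_left hx h1⟩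

lemma eq_slotProb_of_memP {x y : ℕ → ℕ → ℝ} (hxy : memP k n x y)
    (hy : ∀ i ∈ Icc 1 n, ∀ l ∈ Icc 1 k, y i l = τ i * x i l) :
    ∀ i ∈ Icc 1 n, ∀ l ∈ Icc 1 k, x i l = slotProb τ k i l := by
  obtain ⟨hx1k, hx1, hrec, -⟩ := hxy
  intro i hi
  induction i with
  | zero => simp at hi
  | succ i ih =>
    intro l hl
    obtain ⟨hl1, hlk⟩ := mem_Icc.1 hl
    rcases i.eq_zero_or_pos with rfl | hi1
    · rw [slotProb_one]
      split_ifs with h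
      · exact h ▸ hx1k
      · exact hx1 l hl1 (by omega)
    have hi' : i ∈ Icc 1 n := mem_Icc.2 ⟨hi1, by grind⟩
    rw [hrec (i + 1) (by grind) l hl, Nat.add_sub_cancel, slotProb_succ hi1, hy i hi' l hl,
      ih hi' l hl]
    split_ifs with h
    · rw [hy i hi' (l + 1) (by grind), ih hi' (l + 1) (by grind)]
      ring
    · ring

lemma coverSum_slotProb (G : ℕ → ℕ → ℝ) (j : ℕ) (hτ : ∀ i ∈ Icc 1 n, τ i ∈ Set.Icc 0 1) :
    coverSum k n G j (slotProb τ k) (fun i l => τ i * slotProb τ k i l)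
      = ∑ i ∈ Icc 1 n, min (τ i) (G i j) * ∑ l ∈ Icc 1 k, slotProb τ k i l := by
  refine sum_congr rfl fun i hi => ?_
  rw [mul_sum]
  refine sum_congr rfl fun l _ => ?_
  exact (min_mul_of_nonneg _ _ (slotProb_nonneg hτ (mem_Icc.1 hi).2 l)).symm

end SlotProb

lemma IsTypeDist.coverSum_nonneg {k n m : ℕ} {G : ℕ → ℕ → ℝ} {x y : ℕ → ℕ → ℝ}
    (hG : IsTypeDist n m G) {j : ℕ} (hj : j ≤ m) (hxy : memP k n x y) :
    0 ≤ coverSum k n G j x y :=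
  sum_nonneg fun i hi => sum_nonneg fun l hl =>
    have hyx := hxy.2.2.2 i hi l hl
    le_min hyx.1 (mul_nonneg (hG.nonneg hi hj) (hyx.1.trans hyx.2))

lemma innerLP_OST_eq_sSup {k n m : ℕ} {G : ℕ → ℕ → ℝ} {J : ℕ} {ρ : ℝ} (hG : IsTypeDist n m G)
    (hJ : J ∈ Icc 1 m) (hρ0 : 0 ≤ ρ) (hρ1 : ρ ≤ 1) (Q : ℕ → ℝ) :
    innerLP_OST k n m G J ρ Q = sSup {θ | ∀ j ∈ Icc 1 m, θ * Q j ≤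
      coverSum k n G j (slotProb (tauOf G J ρ) k)
        (fun i l => tauOf G J ρ i * slotProb (tauOf G J ρ) k i l)} := by
  have hτ : ∀ i ∈ Icc 1 n, tauOf G J ρ i ∈ Set.Icc 0 1 := fun i hi =>
    hG.tauOf_mem_Icc hi hJ hρ0 hρ1
  unfold innerLP_OST
  congr 1
  ext θ
  constructor
  · rintro ⟨x, y, hxy, hy, hθ⟩ j hj
    convert hθ j hj using 1
    refine sum_congr rfl fun i hi => sum_congr rfl fun l hl => ?_
    rw [hy i hi l hl, eq_slotProb_of_memP hxy hy i hi l hl]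
  · exact fun hθ => ⟨_, _, memP_slotProb hτ, fun _ _ _ _ => rfl, hθ⟩

/-- The expected value of agent `i` to the static policy `(J, ρ)` when a slot is free. -/
def acceptValue (G : ℕ → ℕ → ℝ) (J : ℕ) (ρ : ℝ) (r : ℕ → ℝ) (i : ℕ) : ℝ :=
  ∑ j ∈ Icc 1 (J - 1), pOf G i j * r j + ρ * pOf G i J * r J

section OST

variable {k n m J : ℕ} {ρ : ℝ} {G : ℕ → ℕ → ℝ} {r : ℕ → ℝ}

lemma ostW_succ (hG : IsTypeDist n m G) {d l : ℕ} (hd : d < n) (hl : l ≠ 0) :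
    ostW n m J ρ r (pOf G) (d + 1) l = ostW n m J ρ r (pOf G) d l
      + acceptValue G J ρ r (n - d) - tauOf G J ρ (n - d)
        * (ostW n m J ρ r (pOf G) d l - ostW n m J ρ r (pOf G) d (l - 1)) := by
  set Δ := ostW n m J ρ r (pOf G) d l - ostW n m J ρ r (pOf G) d (l - 1)
  have hsplit : ∑ j ∈ Icc 1 (J - 1), pOf G (n - d) j * (r j - Δ)
      = ∑ j ∈ Icc 1 (J - 1), pOf G (n - d) j * r j
        - (∑ j ∈ Icc 1 (J - 1), pOf G (n - d) j) * Δ := by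
    rw [sum_mul, ← sum_sub_distrib]
    exact sum_congr rfl fun _ _ => by ring
  rw [ostW]
  dsimp only
  rw [if_neg hl, hsplit, acceptValue,
    ← hG.sum_pOf_add_mul_pOf (i := n - d) (mem_Icc.2 ⟨by omega, by omega⟩) J ρ]
  ring

/-- `slotProb` evolves by the transpose of the one-step recursion of `ostW`, so the pairing of the
slot distribution on arrival with the value-to-go telescopes over the agents. -/
lemma sum_slotProb_mul_ostW (hG : IsTypeDist n m G) {d : ℕ} (hd : d ≤ n) :
    ∑ l ∈ Icc 1 k, slotProb (tauOf G J ρ) k (n + 1 - d) l * ostW n m J ρ r (pOf G) d l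
      = ∑ i ∈ Icc (n + 1 - d) n,
          acceptValue G J ρ r i * ∑ l ∈ Icc 1 k, slotProb (tauOf G J ρ) k i l := by
  induction d with
  | zero => simp [ostW]
  | succ d ih =>
    set τ := tauOf G J ρ
    set W := ostW n m J ρ r (pOf G) d
    have hi : n + 1 - (d + 1) = n - d := by omega
    have hW0 : W 0 = 0 := by cases d <;> simp [W, ostW]
    have hstep : ∀ l ∈ Icc 1 k, slotProb τ k (n - d) l * ostW n m J ρ r (pOf G) (d + 1) l
        = acceptValue G J ρ r (n - d) * slotProb τ k (n - d) l
          + (1 - τ (n - d)) * (slotProb τ k (n - d) l * W l)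
          + τ (n - d) * (slotProb τ k (n - d) l * W (l - 1)) := fun l hl => by
      rw [ostW_succ hG (by omega) (by grind)]
      ring
    have hnext : ∑ l ∈ Icc 1 k, slotProb τ k (n + 1 - d) l * W l
        = (1 - τ (n - d)) * ∑ l ∈ Icc 1 k, slotProb τ k (n - d) l * W l
          + τ (n - d) * ∑ l ∈ Icc 1 k, slotProb τ k (n - d) l * W (l - 1) := by
      rw [sum_Icc_mul_pred _ W hW0, mul_sum, mul_sum, ← sum_add_distrib]
      refine sum_congr rfl fun l _ => ?_
      rw [show n + 1 - d = n - d + 1 by omega, slotProb_succ (by omega)]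
      ring
    rw [hi, sum_congr rfl hstep, Icc_eq_cons_Ioc (show n - d ≤ n by omega), sum_cons,
      ← Icc_add_one_left_eq_Ioc, show n - d + 1 = n + 1 - d by omega, ← ih (by omega), hnext]
    simp only [sum_add_distrib, mul_sum, add_assoc]

lemma OSTval_eq_sum_acceptValue (hk : 1 ≤ k) (hG : IsTypeDist n m G) :
    OSTval k n m J ρ r (pOf G)
      = ∑ i ∈ Icc 1 n, acceptValue G J ρ r i * ∑ l ∈ Icc 1 k, slotProb (tauOf G J ρ) k i l := by
  have h := sum_slotProb_mul_ostW (k := k) (J := J) (ρ := ρ) (r := r) hG le_rfl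
  simp only [Nat.add_sub_cancel_left, slotProb_one, ite_mul, one_mul, zero_mul, sum_ite_eq',
    mem_Icc, hk, le_refl, and_self, if_true] at h
  exact h

lemma acceptValue_stepValuation (hG : IsTypeDist n m G) {i : ℕ} (hi : i ∈ Icc 1 n)
    (hJ : J ∈ Icc 1 m) (hρ0 : 0 ≤ ρ) (hρ1 : ρ ≤ 1) {j : ℕ} (hj : j ≤ m) :
    acceptValue G J ρ (stepValuation j) i = min (tauOf G J ρ i) (G i j) := by
  obtain ⟨hJ1, hJm⟩ := mem_Icc.1 hJ
  unfold acceptValue stepValuation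
  by_cases hJj : J ≤ j
  · have hτ : tauOf G J ρ i ≤ G i j := (hG.tauOf_le hi hJ hρ1).trans (hG.mono hi hJj hj)
    rw [min_eq_left hτ, ← hG.sum_pOf_add_mul_pOf hi J ρ, if_pos hJj, mul_one]
    exact congrArg (· + _) (sum_congr rfl fun j' hj' => by rw [if_pos (by grind), mul_one])
  · have hG' : G i j ≤ tauOf G J ρ i :=
      (hG.mono hi (by omega) (by omega)).trans (hG.le_tauOf hi hJ hρ0)
    rw [min_eq_right hG', if_neg hJj, mul_zero, add_zero, ← hG.sum_pOf_Icc hi j]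
    simp only [mul_ite, mul_one, mul_zero]
    rw [← sum_filter]
    congr 1
    ext j'
    simp only [mem_filter, mem_Icc]
    omega

lemma acceptValue_eq_sum_layerCoeff (hG : IsTypeDist n m G) {i : ℕ} (hi : i ∈ Icc 1 n)
    (hJ : J ∈ Icc 1 m) (hρ0 : 0 ≤ ρ) (hρ1 : ρ ≤ 1) (r : ℕ → ℝ) :
    acceptValue G J ρ r i
      = ∑ j ∈ Icc 1 m, layerCoeff m r j * min (tauOf G J ρ i) (G i j) := by
  have hr : ∀ j' ∈ Icc 1 J, r j' = ∑ j ∈ Icc 1 m, layerCoeff m r j * stepValuation j j' :=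
    fun j' hj' => (sum_layerCoeff_mul_stepValuation r (by grind)).symm
  rw [sum_congr rfl fun j hj => by
    rw [← acceptValue_stepValuation hG hi hJ hρ0 hρ1 (mem_Icc.1 hj).2]]
  unfold acceptValue
  rw [sum_congr rfl fun j' hj' => by rw [hr j' (by grind)], hr J (by grind)]
  simp only [mul_sum, mul_add, sum_add_distrib]
  rw [sum_comm]
  congr 1 <;> refine sum_congr rfl fun _ _ => ?_
  · exact sum_congr rfl fun _ _ => by ring
  · ring

lemma OSTval_eq_sum_layerCoeff_mul_coverSum (hk : 1 ≤ k) (hG : IsTypeDist n m G)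
    (hJ : J ∈ Icc 1 m) (hρ0 : 0 ≤ ρ) (hρ1 : ρ ≤ 1) (r : ℕ → ℝ) :
    OSTval k n m J ρ r (pOf G) = ∑ j ∈ Icc 1 m, layerCoeff m r j *
      coverSum k n G j (slotProb (tauOf G J ρ) k)
        (fun i l => tauOf G J ρ i * slotProb (tauOf G J ρ) k i l) := by
  have hτ : ∀ i ∈ Icc 1 n, tauOf G J ρ i ∈ Set.Icc 0 1 := fun i hi =>
    hG.tauOf_mem_Icc hi hJ hρ0 hρ1
  simp only [OSTval_eq_sum_acceptValue hk hG, coverSum_slotProb G _ hτ]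
  calc _ = ∑ i ∈ Icc 1 n, ∑ j ∈ Icc 1 m, layerCoeff m r j * min (tauOf G J ρ i) (G i j)
          * ∑ l ∈ Icc 1 k, slotProb (tauOf G J ρ) k i l := sum_congr rfl fun i hi => by
        rw [acceptValue_eq_sum_layerCoeff hG hi hJ hρ0 hρ1, sum_mul]
    _ = _ := by
      rw [sum_comm]
      simp only [mul_sum, mul_assoc]

end OST

section Prophet

variable {k n m : ℕ} {G : ℕ → ℕ → ℝ} {r : ℕ → ℝ}

lemma exists_subset_min_card_le_card_inter {α : Type*} [DecidableEq α] {T : ℕ → Finset α}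
    (hT : Monotone T) (k N : ℕ) :
    ∃ S ⊆ T N, #S = min #(T N) k ∧ ∀ j ≤ N, min #(T j) k ≤ #(S ∩ T j) := by
  induction N with
  | zero =>
    obtain ⟨S, hS, hcard⟩ := exists_subset_card_eq (min_le_left #(T 0) k)
    refine ⟨S, hS, hcard, fun j hj => ?_⟩
    rw [Nat.le_zero.1 hj, inter_eq_left.2 hS, hcard]
  | succ N ih =>
    obtain ⟨S, hS, hcard, hinter⟩ := ih
    obtain ⟨U, hSU, hU, hUcard⟩ := exists_subsuperset_card_eq (hS.trans (hT N.le_succ))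
      (hcard ▸ min_le_min_right k (card_le_card (hT N.le_succ))) (min_le_left _ _)
    refine ⟨U, hU, hUcard, fun j hj => ?_⟩
    rcases hj.lt_or_eq with hj | rfl
    · exact (hinter j (by omega)).trans (card_le_card (inter_subset_inter hSU subset_rfl))
    · rw [inter_eq_left.2 hU, hUcard]

lemma prophVal_eq_sum_layerCoeff (hr : IsValuation m r) {t : Fin n → ℕ}
    (ht : ∀ i, t i ∈ Icc 1 m) :
    prophVal n k (fun i => r (t i))
      = ∑ j ∈ Icc 1 m, layerCoeff m r j * min (#{i | t i ≤ j} : ℝ) k := by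
  set T : ℕ → Finset (Fin n) := fun j => {i | t i ≤ j}
  have hT : Monotone T := fun j j' h i hi => by
    simp only [T, mem_filter_univ] at hi ⊢
    omega
  have hvalue : ∀ S : Finset (Fin n),
      ∑ i ∈ S, r (t i) = ∑ j ∈ Icc 1 m, layerCoeff m r j * #(S ∩ T j) := fun S => by
    rw [sum_congr rfl fun i _ => (sum_layerCoeff_mul_stepValuation r (ht i)).symm, sum_comm]
    refine sum_congr rfl fun j _ => ?_
    rw [← mul_sum, ← filter_mem_eq_inter]
    simp [stepValuation, T]
  have hbound : ∀ S : Finset (Fin n), #S ≤ k → ∀ j, #(S ∩ T j) ≤ min #(T j) k := fun S hS j =>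
    le_min (card_le_card inter_subset_right) ((card_le_card inter_subset_left).trans hS)
  refine IsGreatest.csSup_eq ⟨?_, ?_⟩
  · obtain ⟨S, -, hcard, hinter⟩ := exists_subset_min_card_le_card_inter hT k m
    have hS : #S ≤ k := hcard ▸ min_le_right _ _
    refine ⟨S, hS, ?_⟩
    rw [hvalue]
    refine sum_congr rfl fun j hj => ?_
    rw [le_antisymm (hbound S hS j) (hinter j (mem_Icc.1 hj).2), Nat.cast_min]
  · rintro s ⟨S, hS, rfl⟩
    rw [hvalue]
    refine sum_le_sum fun j hj => mul_le_mul_of_nonneg_left ?_ (hr.layerCoeff_nonneg hj)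
    exact_mod_cast hbound S hS j

lemma filter_piFinset_eq_piFinset (S : Finset (Fin n)) {j : ℕ} (hj : j ≤ m) :
    {t ∈ Fintype.piFinset (fun _ : Fin n => Icc 1 m) | ({i | t i ≤ j} : Finset (Fin n)) = S}
      = Fintype.piFinset (fun i => if i ∈ S then Icc 1 j else Ioc j m) := by
  ext t
  simp only [mem_filter, Fintype.mem_piFinset, Finset.ext_iff]
  constructor
  · rintro ⟨ht, hS⟩ i
    have := ht i
    split_ifs with hi <;> simp only [mem_Icc, mem_Ioc] at this ⊢ <;> grind
  · intro ht
    refine ⟨fun i => ?_, fun i => ?_⟩ <;> have := ht i <;>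
      split_ifs at this with hi <;> simp only [mem_Icc, mem_Ioc] at this ⊢ <;> grind

lemma IsTypeDist.sum_piFinset_prod_pOf_mul (hG : IsTypeDist n m G) {j : ℕ} (hj : j ≤ m)
    (h : ℕ → ℝ) :
    ∑ t ∈ Fintype.piFinset (fun _ : Fin n => Icc 1 m),
        (∏ i : Fin n, pOf G (i.1 + 1) (t i)) * h #{i | t i ≤ j}
      = ∑ S ∈ (Icc 1 n).powerset,
          (∏ a ∈ S, G a j) * (∏ a ∈ Icc 1 n \ S, (1 - G a j)) * h #S := by
  set e : Fin n → ℕ := fun i => i.1 + 1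
  have he : Function.Injective e := fun a b hab => Fin.ext (by simpa [e] using hab)
  have hIcc : Icc 1 n = univ.image e := by
    ext a
    simp only [mem_Icc, mem_image, mem_univ, true_and, e]
    exact ⟨fun ha => ⟨⟨a - 1, by omega⟩, by simp; omega⟩, by rintro ⟨i, rfl⟩; omega⟩
  rw [← sum_fiberwise_of_maps_to (t := univ.powerset)
    (g := fun t => ({i | t i ≤ j} : Finset (Fin n))) (fun _ _ => mem_powerset.2 (subset_univ _)),
    hIcc, powerset_image,
    sum_image fun S _ T _ hST => image_injective he hST]
  refine sum_congr rfl fun S _ => ?_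
  rw [← image_sdiff_of_injOn he.injOn (subset_univ S), prod_image he.injOn, prod_image he.injOn,
    card_image_of_injective _ he, sum_congr rfl fun t ht => by rw [(mem_filter.1 ht).2],
    ← sum_mul, filter_piFinset_eq_piFinset S hj, ← prod_univ_sum]
  have heI : ∀ i, e i ∈ Icc 1 n := fun i => hIcc ▸ mem_image_of_mem e (mem_univ i)
  congr 1
  rw [← prod_mul_prod_compl S, compl_eq_univ_sdiff]
  congr 1 <;> refine prod_congr rfl fun i hi => ?_
  · rw [if_pos hi, hG.sum_pOf_Icc (heI i)]
  · rw [if_neg (mem_sdiff.1 hi).2, hG.sum_pOf_Ioc_last (heI i) hj]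

lemma Proph_eq_sum_layerCoeff_mul_QProph (hG : IsTypeDist n m G) (hr : IsValuation m r) :
    Proph k n m r (pOf G) = ∑ j ∈ Icc 1 m, layerCoeff m r j * QProph k n G j := by
  unfold Proph
  rw [sum_congr rfl fun t ht => by
    rw [prophVal_eq_sum_layerCoeff hr (Fintype.mem_piFinset.1 ht), mul_sum], sum_comm]
  refine sum_congr rfl fun j hj => ?_
  simp only [mul_left_comm _ (layerCoeff m r j), ← mul_sum]
  rw [hG.sum_piFinset_prod_pOf_mul (mem_Icc.1 hj).2 fun c => min (c : ℝ) k]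
  rfl

lemma QProph_nonneg (hG : IsTypeDist n m G) {j : ℕ} (hj : j ≤ m) : 0 ≤ QProph k n G j := by
  unfold QProph eMinBer
  refine sum_nonneg fun S hS => mul_nonneg (mul_nonneg ?_ ?_) (by positivity)
  · exact prod_nonneg fun a ha => hG.nonneg (mem_powerset.1 hS ha) hj
  · exact prod_nonneg fun a ha => sub_nonneg.2 (hG.le_one (mem_sdiff.1 ha).1 hj)

lemma QProph_last (hG : IsTypeDist n m G) : QProph k n G m = min (n : ℝ) k := by
  unfold QProph eMinBer
  rw [sum_eq_single_of_mem _ (mem_powerset_self _) fun S hS hSn => ?_]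
  · simp [prod_congr rfl fun a ha => (hG a ha).2.1]
  · obtain ⟨a, ha, haS⟩ :=
      exists_of_ssubset (Finset.ssubset_iff_subset_ne.2 ⟨mem_powerset.1 hS, hSn⟩)
    rw [prod_eq_zero (mem_sdiff.2 ⟨ha, haS⟩) (by simp [(hG a ha).2.1]), mul_zero,
      zero_mul]

end Prophet

section ExAnte

variable {k n m : ℕ} {G : ℕ → ℕ → ℝ} {r : ℕ → ℝ}

lemma QExAnte_nonneg (hG : IsTypeDist n m G) {j : ℕ} (hj : j ≤ m) : 0 ≤ QExAnte k n G j :=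
  le_min (sum_nonneg fun _ hi => hG.nonneg hi hj) (Nat.cast_nonneg k)

lemma QExAnte_last (hG : IsTypeDist n m G) : QExAnte k n G m = min (n : ℝ) k := by
  simp [QExAnte, sum_congr rfl fun i hi => (hG i hi).2.1]

lemma sum_mul_eq_sum_layerCoeff_mul_sum (r a : ℕ → ℝ) (m : ℕ) :
    ∑ j ∈ Icc 1 m, r j * a j = ∑ j₀ ∈ Icc 1 m, layerCoeff m r j₀ * ∑ j ∈ Icc 1 j₀, a j := by
  calc ∑ j ∈ Icc 1 m, r j * a j
      = ∑ j ∈ Icc 1 m, ∑ j₀ ∈ Icc 1 m, layerCoeff m r j₀ * stepValuation j₀ j * a j :=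
        sum_congr rfl fun j hj => by rw [← sum_mul, sum_layerCoeff_mul_stepValuation r hj]
    _ = _ := by
      rw [sum_comm]
      refine sum_congr rfl fun j₀ hj₀ => ?_
      simp only [stepValuation, mul_ite, mul_one, mul_zero, ite_mul, zero_mul]
      rw [← sum_filter, ← mul_sum]
      congr 2
      ext j
      simp only [mem_filter, mem_Icc] at hj₀ ⊢
      omega

lemma ExAnte_eq_sum_layerCoeff_mul_QExAnte (hG : IsTypeDist n m G) (hr : IsValuation m r) :
    ExAnte k n m r (pOf G) = ∑ j ∈ Icc 1 m, layerCoeff m r j * QExAnte k n G j := by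
  set b : ℕ → ℝ := QExAnte k n G
  have hb0 : b 0 = 0 := by simp [b, QExAnte, sum_congr rfl fun i hi => (hG i hi).1]
  have htel : ∀ j₀, ∑ j ∈ Icc 1 j₀, (b j - b (j - 1)) = b j₀ := fun j₀ => by
    rw [Icc_one_eq_Ioc_zero, sum_Ioc_sub_pred b (Nat.zero_le j₀), hb0, sub_zero]
  refine IsGreatest.csSup_eq ⟨⟨fun j => b j - b (j - 1), fun j hj => ?_, ?_, ?_⟩, ?_⟩
  · have hmono : ∑ i ∈ Icc 1 n, G i (j - 1) ≤ ∑ i ∈ Icc 1 n, G i j :=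
      sum_le_sum fun i hi => (hG i hi).2.2 j hj
    refine ⟨sub_nonneg.2 (min_le_min_right _ hmono), ?_⟩
    calc b j - b (j - 1) ≤ max |∑ i ∈ Icc 1 n, G i j - ∑ i ∈ Icc 1 n, G i (j - 1)| |k - k| :=
          (le_abs_self _).trans (abs_min_sub_min_le_max _ _ _ _)
      _ = ∑ i ∈ Icc 1 n, pOf G i j := by
        rw [sub_self, abs_zero, abs_of_nonneg (sub_nonneg.2 hmono),
          max_eq_left (sub_nonneg.2 hmono), ← sum_sub_distrib]
        rfl
  · rw [htel]
    exact min_le_right _ _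
  · rw [sum_mul_eq_sum_layerCoeff_mul_sum r]
    simp only [htel]
  · rintro s ⟨a, ha, hak, rfl⟩
    rw [sum_mul_eq_sum_layerCoeff_mul_sum r]
    refine sum_le_sum fun j₀ hj₀ => mul_le_mul_of_nonneg_left (le_min ?_ ?_)
      (hr.layerCoeff_nonneg hj₀)
    · calc ∑ j ∈ Icc 1 j₀, a j ≤ ∑ j ∈ Icc 1 j₀, ∑ i ∈ Icc 1 n, pOf G i j :=
            sum_le_sum fun j hj => (ha j (Icc_subset_Icc_right (mem_Icc.1 hj₀).2 hj)).2
        _ = ∑ i ∈ Icc 1 n, G i j₀ := by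
          rw [sum_comm]
          exact sum_congr rfl fun i hi => hG.sum_pOf_Icc hi j₀
    · exact (sum_le_sum_of_subset_of_nonneg (Icc_subset_Icc_right (mem_Icc.1 hj₀).2)
        fun j hj _ => (ha j hj).1).trans hak

end ExAnte

lemma sInf_OSTval_div_eq_innerLP_OST {k n m J : ℕ} {ρ : ℝ} {G : ℕ → ℕ → ℝ} (hk : 1 ≤ k)
    (hG : IsTypeDist n m G) (hJ : J ∈ Icc 1 m) (hρ : ρ ∈ Set.Ioc 0 1) {Q : ℕ → ℝ}
    {D : (ℕ → ℝ) → ℝ} (hQ : ∀ j ≤ m, 0 ≤ Q j) (hQm : 0 < Q m)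
    (hD : ∀ r, IsValuation m r → D r = ∑ j ∈ Icc 1 m, layerCoeff m r j * Q j) :
    sInf {u | ∃ r, IsValuation m r ∧ 0 < D r ∧ u = OSTval k n m J ρ r (pOf G) / D r}
      = innerLP_OST k n m G J ρ Q := by
  obtain ⟨hρ0, hρ1⟩ := hρ
  have hτ : ∀ i ∈ Icc 1 n, tauOf G J ρ i ∈ Set.Icc 0 1 := fun i hi =>
    hG.tauOf_mem_Icc hi hJ hρ0.le hρ1
  rw [innerLP_OST_eq_sSup hG hJ hρ0.le hρ1]
  exact sInf_ratio_eq_sSup (fun r hr j hj => hr.layerCoeff_nonneg hj)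
    (fun r _ => OSTval_eq_sum_layerCoeff_mul_coverSum hk hG hJ hρ0.le hρ1 r) hD
    (fun j _ => isValuation_stepValuation j) (fun j hj j' hj' => layerCoeff_stepValuation hj hj')
    (fun j hj => hG.coverSum_nonneg (mem_Icc.1 hj).2 (memP_slotProb hτ))
    (fun j hj => hQ j (mem_Icc.1 hj).2) (by grind) hQm

lemma sInf_sSup_congr {n : ℕ} {f g : ℕ → (ℕ → ℕ → ℝ) → ℕ → ℝ → ℝ}
    (h : ∀ m G J ρ, IsTypeDist n m G → J ∈ Icc 1 m → ρ ∈ Set.Ioc (0 : ℝ) 1 →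
      f m G J ρ = g m G J ρ) :
    sInf {v : ℝ | ∃ m, 1 ≤ m ∧ ∃ G, IsTypeDist n m G ∧
        v = sSup {w : ℝ | ∃ J ∈ Icc 1 m, ∃ ρ ∈ Set.Ioc (0 : ℝ) 1, w = f m G J ρ}}
      = sInf {v : ℝ | ∃ m, 1 ≤ m ∧ ∃ G, IsTypeDist n m G ∧
        v = sSup {w : ℝ | ∃ J ∈ Icc 1 m, ∃ ρ ∈ Set.Ioc (0 : ℝ) 1, w = g m G J ρ}} := by
  congr 1
  ext v
  refine exists_congr fun m => and_congr_right fun _ => exists_congr fun G =>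
    and_congr_right fun hG => ?_
  rw [Set.ext fun w => exists_congr fun J => and_congr_right fun hJ => exists_congr fun ρ =>
    and_congr_right fun hρ => by rw [h m G J ρ hG hJ hρ]]

/-- Reformulating the tight guarantees for OST:
`inf_G sup_{J,ρ} inf_r OST_{J,ρ}(I)/Proph(I) = inf_G sup_{J,ρ} innerLP^{OST(J,ρ)/Proph}(G)`,
and the analogous statement relative to the ex-ante relaxation. -/
theorem stmt4 (k n : ℕ) (hk : 1 ≤ k) (hkn : k < n) :
    (sInf {v : ℝ | ∃ m, 1 ≤ m ∧ ∃ G, IsTypeDist n m G ∧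
        v = sSup {w : ℝ | ∃ J ∈ Finset.Icc 1 m, ∃ ρ ∈ Set.Ioc (0:ℝ) 1,
          w = sInf {u : ℝ | ∃ r : ℕ → ℝ, IsValuation m r ∧
            0 < Proph k n m r (pOf G) ∧
            u = OSTval k n m J ρ r (pOf G) / Proph k n m r (pOf G)}}}
      = sInf {v : ℝ | ∃ m, 1 ≤ m ∧ ∃ G, IsTypeDist n m G ∧
          v = sSup {w : ℝ | ∃ J ∈ Finset.Icc 1 m, ∃ ρ ∈ Set.Ioc (0:ℝ) 1,
            w = innerLP_OST k n m G J ρ (QProph k n G)}}) ∧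
    (sInf {v : ℝ | ∃ m, 1 ≤ m ∧ ∃ G, IsTypeDist n m G ∧
        v = sSup {w : ℝ | ∃ J ∈ Finset.Icc 1 m, ∃ ρ ∈ Set.Ioc (0:ℝ) 1,
          w = sInf {u : ℝ | ∃ r : ℕ → ℝ, IsValuation m r ∧
            0 < ExAnte k n m r (pOf G) ∧
            u = OSTval k n m J ρ r (pOf G) / ExAnte k n m r (pOf G)}}}
      = sInf {v : ℝ | ∃ m, 1 ≤ m ∧ ∃ G, IsTypeDist n m G ∧
          v = sSup {w : ℝ | ∃ J ∈ Finset.Icc 1 m, ∃ ρ ∈ Set.Ioc (0:ℝ) 1,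
            w = innerLP_OST k n m G J ρ (QExAnte k n G)}}) := by
  have hpos : (0 : ℝ) < min (n : ℝ) k := lt_min (by exact_mod_cast (by omega : 0 < n))
    (by exact_mod_cast hk)
  refine ⟨sInf_sSup_congr fun m G J ρ hG hJ hρ => ?_, sInf_sSup_congr fun m G J ρ hG hJ hρ => ?_⟩
  · exact sInf_OSTval_div_eq_innerLP_OST hk hG hJ hρ (fun _ hj => QProph_nonneg hG hj)
      (QProph_last hG ▸ hpos) fun _ hr => Proph_eq_sum_layerCoeff_mul_QProph hG hr
  · exact sInf_OSTval_div_eq_innerLP_OST hk hG hJ hρ (fun _ hj => QExAnte_nonneg hG hj)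
      (QExAnte_last hG ▸ hpos) fun _ hr => ExAnte_eq_sum_layerCoeff_mul_QExAnte hG hr
end

section
/- Fix integers k ≥ 1, n ≥ 1 and reals τ_1, ..., τ_n ∈ [0,1]. Suppose (x,y) ∈ P(k,n) satisfies y_i^l = τ_i·x_i^l for all i ∈ {1,...,n} and l ∈ {1,...,k}. Then for every i ∈ {1,...,n}: Σ_{l=1}^k x_i^l = P(Σ_{i'<i} X_{i'} < k) and Σ_{i'=1}^i τ_{i'}·Σ_{l=1}^k x_{i'}^l = E[min{Σ_{i'=1}^i X_{i'}, k}], where X_1, ..., X_n are independent Bernoulli random variables with P(X_i = 1) = τ_i. -/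
open Finset

/-- `P(X_1+...+X_t < k)` for independent Bernoulli `X_i` (i ∈ {1,...,t}) with success
probabilities `p i`. -/
noncomputable def probLt (p : ℕ → ℝ) (t k : ℕ) : ℝ :=
  ∑ S ∈ (Finset.Icc 1 t).powerset.filter (fun S => S.card < k),
    (∏ i ∈ S, p i) * ∏ i ∈ Finset.Icc 1 t \ S, (1 - p i)

noncomputable def Wt (p : ℕ → ℝ) (t : ℕ) (g : ℕ → ℝ) : ℝ :=
  ∑ S ∈ (Finset.Icc 1 t).powerset,
    (∏ i ∈ S, p i) * (∏ i ∈ Finset.Icc 1 t \ S, (1 - p i)) * g S.card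

lemma Wt_zero (p : ℕ → ℝ) (g : ℕ → ℝ) : Wt p 0 g = g 0 := by
  simp [Wt]

lemma Wt_succ (p : ℕ → ℝ) (t : ℕ) (g : ℕ → ℝ) :
    Wt p (t+1) g = (1 - p (t+1)) * Wt p t g + p (t+1) * Wt p t (fun m => g (m+1)) := by
  have hI : Finset.Icc 1 (t+1) = insert (t+1) (Finset.Icc 1 t) :=
    (Finset.insert_Icc_right_eq_Icc_add_one (by omega)).symm
  have ht : (t+1) ∉ Finset.Icc 1 t := by simp
  rw [Wt, hI, Finset.sum_powerset_insert ht]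
  congr 1
  · rw [Wt, Finset.mul_sum]
    refine Finset.sum_congr rfl fun S hS => ?_
    rw [Finset.mem_powerset] at hS
    have h1 : insert (t+1) (Finset.Icc 1 t) \ S = insert (t+1) (Finset.Icc 1 t \ S) := by
      rw [Finset.insert_sdiff_of_notMem _ (fun h => ht (hS h))]
    rw [h1, Finset.prod_insert (by simp)]
    ring
  · rw [Wt, Finset.mul_sum]
    refine Finset.sum_congr rfl fun S hS => ?_
    rw [Finset.mem_powerset] at hS
    have htS : (t+1) ∉ S := fun h => ht (hS h)
    have h1 : insert (t+1) (Finset.Icc 1 t) \ insert (t+1) S = Finset.Icc 1 t \ S := by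
      ext a
      simp only [Finset.mem_sdiff, Finset.mem_insert, not_or]
      constructor
      · rintro ⟨h2 | h2, h3, h4⟩
        · exact absurd h2 h3
        · exact ⟨h2, h4⟩
      · rintro ⟨h2, h4⟩
        exact ⟨Or.inr h2, fun h => ht (h ▸ h2), h4⟩
    rw [h1, Finset.prod_insert htS, Finset.card_insert_of_notMem htS]
    ring

lemma Wt_add (p : ℕ → ℝ) (t : ℕ) (g1 g2 : ℕ → ℝ) :
    Wt p t (fun m => g1 m + g2 m) = Wt p t g1 + Wt p t g2 := by
  simp [Wt, mul_add, Finset.sum_add_distrib]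

lemma Wt_congr (p : ℕ → ℝ) (t : ℕ) (g1 g2 : ℕ → ℝ) (h : ∀ m, g1 m = g2 m) :
    Wt p t g1 = Wt p t g2 := by
  simp only [Wt, h]

lemma probLt_eq_Wt (p : ℕ → ℝ) (t k : ℕ) :
    probLt p t k = Wt p t (fun m => if m < k then 1 else 0) := by
  rw [probLt, Wt, Finset.sum_filter]
  refine Finset.sum_congr rfl fun S _ => ?_
  by_cases h : S.card < k <;> simp [h]

lemma eMinBer_eq_Wt (p : ℕ → ℝ) (t k : ℕ) :
    eMinBer p t k = Wt p t (fun m => min (m : ℝ) (k : ℝ)) := rfl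

lemma eMinBer_succ (p : ℕ → ℝ) (t k : ℕ) :
    eMinBer p (t+1) k = eMinBer p t k + p (t+1) * probLt p t k := by
  rw [eMinBer_eq_Wt, Wt_succ, eMinBer_eq_Wt, probLt_eq_Wt]
  have h : ∀ m : ℕ, min ((m+1 : ℕ) : ℝ) (k : ℝ)
      = min (m : ℝ) (k : ℝ) + (if m < k then (1:ℝ) else 0) := by
    intro m
    by_cases h : m < k
    · have h1 : ((m:ℝ)+1) ≤ k := by exact_mod_cast h
      have h2 : (m:ℝ) ≤ k := by linarith
      push_cast
      rw [min_eq_left h1, min_eq_left h2, if_pos h]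
    · have h1 : (k:ℝ) ≤ m := by exact_mod_cast Nat.le_of_not_lt h
      have h2 : (k:ℝ) ≤ m + 1 := by linarith
      push_cast
      rw [min_eq_right h2, min_eq_right h1, if_neg h]
      ring
  rw [Wt_congr p t _ _ h, Wt_add]
  ring

lemma chi_sum (k : ℕ) (m : ℕ) :
    ∑ l ∈ Finset.Icc 1 k, (if m = k - l then (1:ℝ) else 0) = if m < k then 1 else 0 := by
  by_cases hm : m < k
  · rw [if_pos hm, Finset.sum_eq_single (k - m)]
    · rw [if_pos (by omega)]
    · intro l hl hne
      rw [Finset.mem_Icc] at hl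
      rw [if_neg (by omega)]
    · intro h
      exact absurd (Finset.mem_Icc.mpr ⟨by omega, by omega⟩) h
  · rw [if_neg hm, Finset.sum_eq_zero]
    intro l hl
    rw [Finset.mem_Icc] at hl
    rw [if_neg (by omega)]

/-- if `(x,y) ∈ P(k,n)` and `y_i^l = τ_i·x_i^l`, then for every `i`,
`Σ_l x_i^l = P(Σ_{i'<i} Ber(τ_{i'}) < k)` and
`Σ_{i'≤i} τ_{i'}·Σ_l x_{i'}^l = E[min{Σ_{i'≤i} Ber(τ_{i'}), k}]`. -/
theorem stmt6 (k n : ℕ) (hk : 1 ≤ k) (hn : 1 ≤ n) (τ : ℕ → ℝ)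
    (hτ : ∀ i ∈ Finset.Icc 1 n, τ i ∈ Set.Icc (0:ℝ) 1)
    (x y : ℕ → ℕ → ℝ) (hmem : memP k n x y)
    (hthresh : ∀ i ∈ Finset.Icc 1 n, ∀ l ∈ Finset.Icc 1 k, y i l = τ i * x i l) :
    ∀ i ∈ Finset.Icc 1 n,
      (∑ l ∈ Finset.Icc 1 k, x i l = probLt τ (i-1) k) ∧
      (∑ i' ∈ Finset.Icc 1 i, τ i' * ∑ l ∈ Finset.Icc 1 k, x i' l = eMinBer τ i k) := by
  obtain ⟨hx1k, hx1l, hrec, hy⟩ := hmem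
  have claimA : ∀ i, 1 ≤ i → i ≤ n → ∀ l, 1 ≤ l → l ≤ k →
      x i l = Wt τ (i-1) (fun m => if m = k - l then 1 else 0) := by
    intro i
    induction i with
    | zero => omega
    | succ j ih =>
      intro _ hjn l hl1 hlk
      by_cases hj : j = 0
      · subst hj
        simp only [Nat.add_sub_cancel, Wt_zero]
        by_cases hlek : l = k
        · subst hlek; simp [hx1k]
        · rw [hx1l l hl1 (by omega)]
          have h0 : ¬ (0 = k - l) := by omega
          simp [h0]
      · have hrecj := hrec (j+1) (Finset.mem_Icc.mpr ⟨by omega, by omega⟩) l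
          (Finset.mem_Icc.mpr ⟨hl1, hlk⟩)
        simp only [Nat.add_sub_cancel] at hrecj ⊢
        have hyj : y j l = τ j * x j l :=
          hthresh j (Finset.mem_Icc.mpr ⟨by omega, by omega⟩) l (Finset.mem_Icc.mpr ⟨hl1, hlk⟩)
        obtain ⟨m, rfl⟩ : ∃ m, j = m + 1 := ⟨j - 1, by omega⟩
        rw [Wt_succ, hrecj, hyj, ih (by omega) (by omega) l hl1 hlk]
        simp only [Nat.add_sub_cancel]
        by_cases hlk' : l < k
        · have hyj1 : y (m+1) (l+1) = τ (m+1) * x (m+1) (l+1) :=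
            hthresh (m+1) (Finset.mem_Icc.mpr ⟨by omega, by omega⟩) (l+1)
              (Finset.mem_Icc.mpr ⟨by omega, by omega⟩)
          rw [if_pos hlk', hyj1, ih (by omega) (by omega) (l+1) (by omega) (by omega)]
          simp only [Nat.add_sub_cancel]
          have hg : ∀ mm : ℕ,
              (if mm + 1 = k - l then (1:ℝ) else 0) = (if mm = k - (l+1) then 1 else 0) := by
            intro mm; by_cases h : mm + 1 = k - l
            · rw [if_pos h, if_pos (by omega)]
            · rw [if_neg h, if_neg (by omega)]
          rw [Wt_congr _ _ _ _ hg]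
          ring
        · have hlk2 : l = k := by omega
          rw [if_neg hlk']
          have hg : ∀ mm : ℕ, (if mm + 1 = k - l then (1:ℝ) else 0) = 0 := by
            intro mm; rw [if_neg (by omega)]
          rw [Wt_congr _ _ _ _ hg]
          have hz : Wt τ m (fun _ => (0:ℝ)) = 0 := by simp [Wt]
          rw [hz]
          ring
  have claimB : ∀ i, 1 ≤ i → i ≤ n →
      ∑ l ∈ Finset.Icc 1 k, x i l = probLt τ (i-1) k := by
    intro i hi1 hin
    rw [probLt_eq_Wt]
    have h1 : ∑ l ∈ Finset.Icc 1 k, x i l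
        = ∑ l ∈ Finset.Icc 1 k, Wt τ (i-1) (fun m => if m = k - l then 1 else 0) :=
      Finset.sum_congr rfl (fun l hl => by
        rw [Finset.mem_Icc] at hl
        exact claimA i hi1 hin l hl.1 hl.2)
    rw [h1]
    simp only [Wt]
    rw [Finset.sum_comm]
    refine Finset.sum_congr rfl fun S _ => ?_
    rw [← Finset.mul_sum, chi_sum]
  have hprob0 : probLt τ 0 k = 1 := by
    rw [probLt_eq_Wt, Wt_zero, if_pos (show 0 < k from hk)]
  have hemin0 : eMinBer τ 0 k = 0 := by
    rw [eMinBer_eq_Wt, Wt_zero]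
    simp
  have claimD : ∀ i, 1 ≤ i → i ≤ n →
      ∑ i' ∈ Finset.Icc 1 i, τ i' * ∑ l ∈ Finset.Icc 1 k, x i' l = eMinBer τ i k := by
    intro i
    induction i with
    | zero => omega
    | succ j ih =>
      intro _ hjn
      by_cases hj : j = 0
      · subst hj
        rw [Finset.Icc_self, Finset.sum_singleton, claimB 1 le_rfl (by omega)]
        simp only [Nat.sub_self]
        rw [hprob0, eMinBer_succ, hemin0, hprob0]
        ring
      · rw [Finset.sum_Icc_succ_top (by omega), ih (by omega) (by omega),
          claimB (j+1) (by omega) hjn]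
        simp only [Nat.add_sub_cancel]
        rw [eMinBer_succ]
  intro i hi
  rw [Finset.mem_Icc] at hi
  exact ⟨claimB i hi.1 hi.2, claimD i hi.1 hi.2⟩
end

section
/- Fix integers k ≥ 1 and n > k, type distributions G over m types for n agents, J ∈ {1,...,m} and ρ ∈ (0,1]. Then innerLP^{OST(J,ρ)/ExAnte}_{k,n}(G) ≥ min{ P(Σ_{i=1}^{n-1} X_i < k), E[min{Σ_{i=1}^{n-1} X_i, k}]/k }, where X_1, ..., X_{n-1} are independent Bernoulli random variables with P(X_i = 1) = τ_i(J,ρ) = (1-ρ)·G_{i,J-1} + ρ·G_{iJ}. -/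
open Finset

/-- The simplified dual LP `innerLP^{OST(J,ρ)/ExAnte}_{k,n}(G)`. -/
noncomputable def innerLP_OST_ExAnte (k n m : ℕ) (G : ℕ → ℕ → ℝ) (J : ℕ) (ρ : ℝ) : ℝ :=
  sSup {θ : ℝ | ∃ x y, memP k n x y ∧
    (∀ i ∈ Finset.Icc 1 n, ∀ l ∈ Finset.Icc 1 k, y i l = tauOf G J ρ i * x i l) ∧
    ∀ j ∈ Finset.Icc 1 m, θ * QExAnte k n G j ≤ coverSum k n G j x y}

namespace Stmt7Aux

noncomputable def W (p : ℕ → ℝ) (t : ℕ) (S : Finset ℕ) : ℝ :=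
  (∏ i ∈ S, p i) * ∏ i ∈ Finset.Icc 1 t \ S, (1 - p i)

lemma Icc_succ (t : ℕ) : Finset.Icc 1 (t+1) = insert (t+1) (Finset.Icc 1 t) := by
  ext x; simp [Finset.mem_Icc]; omega

lemma notMem_Icc_succ (t : ℕ) : t + 1 ∉ Finset.Icc 1 t := by simp

lemma W_nonneg {p : ℕ → ℝ} {t : ℕ} (hp : ∀ i ∈ Finset.Icc 1 t, 0 ≤ p i ∧ p i ≤ 1)
    {S : Finset ℕ} (hS : S ∈ (Finset.Icc 1 t).powerset) : 0 ≤ W p t S := by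
  rw [Finset.mem_powerset] at hS
  apply mul_nonneg
  · exact Finset.prod_nonneg fun i hi => (hp i (hS hi)).1
  · exact Finset.prod_nonneg fun i hi => by
      have := (hp i (Finset.mem_sdiff.mp hi).1).2; linarith

lemma W_insert_top {p : ℕ → ℝ} {t : ℕ} {S : Finset ℕ}
    (hS : S ∈ (Finset.Icc 1 t).powerset) :
    W p (t+1) S = (1 - p (t+1)) * W p t S ∧
    W p (t+1) (insert (t+1) S) = p (t+1) * W p t S := by
  rw [Finset.mem_powerset] at hS
  have hne : t + 1 ∉ S := fun h => notMem_Icc_succ t (hS h)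
  constructor
  · have h1 : Finset.Icc 1 (t+1) \ S = insert (t+1) (Finset.Icc 1 t \ S) := by
      rw [Icc_succ, Finset.insert_sdiff_of_notMem _ hne]
    rw [W, W, h1, Finset.prod_insert (by simp)]
    ring
  · have h2 : Finset.Icc 1 (t+1) \ insert (t+1) S = Finset.Icc 1 t \ S := by
      ext x
      simp only [Finset.mem_sdiff, Finset.mem_Icc, Finset.mem_insert]
      constructor
      · rintro ⟨⟨h1, h2⟩, h3⟩
        push_neg at h3
        exact ⟨⟨h1, by omega⟩, fun hx => h3.2 hx⟩
      · rintro ⟨⟨h1, h2⟩, h3⟩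
        refine ⟨⟨h1, by omega⟩, ?_⟩
        push_neg
        exact ⟨by omega, h3⟩
    rw [W, W, h2, Finset.prod_insert hne]
    ring

/-- the fundamental split lemma -/
lemma sum_W_succ (p : ℕ → ℝ) (t : ℕ) (g : Finset ℕ → ℝ) :
    ∑ S ∈ (Finset.Icc 1 (t+1)).powerset, W p (t+1) S * g S
    = ∑ S ∈ (Finset.Icc 1 t).powerset,
        W p t S * ((1 - p (t+1)) * g S + p (t+1) * g (insert (t+1) S)) := by
  rw [Icc_succ, Finset.sum_powerset_insert (notMem_Icc_succ t)]
  rw [← Finset.sum_add_distrib]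
  apply Finset.sum_congr rfl
  intro S hS
  have h := W_insert_top (p := p) hS
  have e1 : W p (t+1) S = (1 - p (t+1)) * W p t S := by
    have := h.1; rw [W, W] at *
    rw [Icc_succ] at this ⊢; exact this
  rw [e1, h.2]; ring

lemma probLt_eq (p : ℕ → ℝ) (t k : ℕ) :
    probLt p t k = ∑ S ∈ (Finset.Icc 1 t).powerset,
      W p t S * (if S.card < k then (1:ℝ) else 0) := by
  rw [probLt, Finset.sum_filter]
  apply Finset.sum_congr rfl
  intro S _
  rw [W]; split_ifs <;> ring

lemma eMinBer_eq (p : ℕ → ℝ) (t k : ℕ) :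
    eMinBer p t k = ∑ S ∈ (Finset.Icc 1 t).powerset,
      W p t S * min (S.card : ℝ) (k : ℝ) := rfl

lemma probLt_nonneg {p : ℕ → ℝ} {t k : ℕ}
    (hp : ∀ i ∈ Finset.Icc 1 t, 0 ≤ p i ∧ p i ≤ 1) : 0 ≤ probLt p t k := by
  rw [probLt_eq]
  apply Finset.sum_nonneg
  intro S hS
  exact mul_nonneg (W_nonneg hp hS) (by positivity)

lemma eMinBer_nonneg {p : ℕ → ℝ} {t k : ℕ}
    (hp : ∀ i ∈ Finset.Icc 1 t, 0 ≤ p i ∧ p i ≤ 1) : 0 ≤ eMinBer p t k := by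
  rw [eMinBer_eq]
  apply Finset.sum_nonneg
  intro S hS
  exact mul_nonneg (W_nonneg hp hS) (le_min (by positivity) (by positivity))

lemma card_insert_top {t : ℕ} {S : Finset ℕ} (hS : S ∈ (Finset.Icc 1 t).powerset) :
    (insert (t+1) S).card = S.card + 1 := by
  rw [Finset.mem_powerset] at hS
  exact Finset.card_insert_of_notMem (fun h => notMem_Icc_succ t (hS h))

lemma probLt_succ_le {p : ℕ → ℝ} {t k : ℕ}
    (hp : ∀ i ∈ Finset.Icc 1 (t+1), 0 ≤ p i ∧ p i ≤ 1) :
    probLt p (t+1) k ≤ probLt p t k := by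
  have hpt : ∀ i ∈ Finset.Icc 1 t, 0 ≤ p i ∧ p i ≤ 1 := by
    intro i hi; exact hp i (by rw [Finset.mem_Icc] at hi ⊢; omega)
  rw [probLt_eq, probLt_eq, sum_W_succ]
  apply Finset.sum_le_sum
  intro S hS
  have hW := W_nonneg hpt hS
  have hcard := card_insert_top hS
  have hq := hp (t+1) (by rw [Finset.mem_Icc]; omega)
  rw [hcard]
  split_ifs with h1 h2 h2 <;> [nlinarith; nlinarith; omega; nlinarith]

lemma probLt_antitone {p : ℕ → ℝ} {k : ℕ} {a b : ℕ} (hab : a ≤ b)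
    (hp : ∀ i ∈ Finset.Icc 1 b, 0 ≤ p i ∧ p i ≤ 1) :
    probLt p b k ≤ probLt p a k := by
  induction b with
  | zero =>
    have : a = 0 := by omega
    subst this; rfl
  | succ b ih =>
    rcases Nat.eq_or_lt_of_le hab with h | h
    · subst h; rfl
    · have hpb : ∀ i ∈ Finset.Icc 1 b, 0 ≤ p i ∧ p i ≤ 1 := by
        intro i hi; exact hp i (by rw [Finset.mem_Icc] at hi ⊢; omega)
      exact le_trans (probLt_succ_le hp) (ih (by omega) hpb)

lemma min_cast_succ (c k : ℕ) :
    min ((c:ℝ) + 1) (k:ℝ) = min (c:ℝ) (k:ℝ) + (if c < k then (1:ℝ) else 0) := by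
  split_ifs with h
  · rw [min_eq_left, min_eq_left]
    · exact_mod_cast Nat.le_of_lt h
    · push_cast; exact_mod_cast Nat.succ_le_of_lt h
  · push_neg at h
    rw [min_eq_right, min_eq_right] 
    · ring
    · exact_mod_cast h
    · have : (k:ℝ) ≤ c := by exact_mod_cast h
      linarith

lemma eMinBer_succ (p : ℕ → ℝ) (t k : ℕ) :
    eMinBer p (t+1) k = eMinBer p t k + p (t+1) * probLt p t k := by
  rw [eMinBer_eq, eMinBer_eq, probLt_eq, sum_W_succ, Finset.mul_sum, ← Finset.sum_add_distrib]
  apply Finset.sum_congr rfl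
  intro S hS
  rw [card_insert_top hS]
  push_cast
  rw [min_cast_succ]
  ring

lemma sum_tau_eq (p : ℕ → ℝ) (k : ℕ) (n : ℕ) :
    ∑ i ∈ Finset.Icc 1 n, p i * probLt p (i-1) k = eMinBer p n k := by
  induction n with
  | zero =>
    simp [eMinBer]
  | succ n ih =>
    rw [Icc_succ, Finset.sum_insert (notMem_Icc_succ n), ih, eMinBer_succ]
    simp; ring


/-- x i l = P(sum of first i-1 Bernoullis = k - l) -/
noncomputable def xv (p : ℕ → ℝ) (k i l : ℕ) : ℝ :=
  ∑ S ∈ (Finset.Icc 1 (i-1)).powerset.filter (fun S => S.card + l = k), W p (i-1) S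

lemma xv_eq (p : ℕ → ℝ) (k i l : ℕ) :
    xv p k i l = ∑ S ∈ (Finset.Icc 1 (i-1)).powerset,
      W p (i-1) S * (if S.card + l = k then (1:ℝ) else 0) := by
  rw [xv, Finset.sum_filter]
  exact Finset.sum_congr rfl fun S _ => by split_ifs <;> simp

lemma xv_one (p : ℕ → ℝ) (k l : ℕ) : xv p k 1 l = if l = k then 1 else 0 := by
  rw [xv]
  have h0 : Finset.Icc 1 (1-1) = (∅ : Finset ℕ) := by simp
  rw [h0, Finset.powerset_empty, Finset.filter_singleton]
  split_ifs with h1 h2 h2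
  · simp [W, h0]
  · simp at h1; omega
  · simp at h1; omega
  · simp

lemma xv_nonneg {p : ℕ → ℝ} {k i l : ℕ}
    (hp : ∀ i' ∈ Finset.Icc 1 (i-1), 0 ≤ p i' ∧ p i' ≤ 1) : 0 ≤ xv p k i l := by
  rw [xv_eq]
  exact Finset.sum_nonneg fun S hS => mul_nonneg (W_nonneg hp hS) (by positivity)

lemma xv_succ (p : ℕ → ℝ) (k : ℕ) {i : ℕ} (hi : 2 ≤ i) {l : ℕ} (hl : 1 ≤ l) (hlk : l ≤ k) :
    xv p k i l = xv p k (i-1) l - p (i-1) * xv p k (i-1) l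
      + (if l < k then p (i-1) * xv p k (i-1) (l+1) else 0) := by
  obtain ⟨t, rfl⟩ : ∃ t, i = t + 2 := ⟨i - 2, by omega⟩
  rw [xv_eq, xv_eq, xv_eq]
  simp only [show t + 2 - 1 = t + 1 from rfl, show t + 1 - 1 = t from rfl]
  rw [sum_W_succ]
  by_cases hlt : l < k
  · rw [if_pos hlt, Finset.mul_sum, Finset.mul_sum, ← Finset.sum_sub_distrib,
      ← Finset.sum_add_distrib]
    apply Finset.sum_congr rfl
    intro S hS
    rw [card_insert_top hS]
    split_ifs with h1 h2 h3 <;> try omega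
    all_goals ring
  · rw [if_neg hlt, Finset.mul_sum, ← Finset.sum_sub_distrib, add_zero]
    apply Finset.sum_congr rfl
    intro S hS
    rw [card_insert_top hS]
    split_ifs with h1 h2 <;> try omega
    all_goals ring

lemma sum_xv (p : ℕ → ℝ) {k : ℕ} (hk : 1 ≤ k) (i : ℕ) :
    ∑ l ∈ Finset.Icc 1 k, xv p k i l = probLt p (i-1) k := by
  rw [probLt_eq]
  have : ∀ l, xv p k i l = ∑ S ∈ (Finset.Icc 1 (i-1)).powerset,
      W p (i-1) S * (if S.card + l = k then (1:ℝ) else 0) := fun l => xv_eq p k i l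
  simp_rw [this]
  rw [Finset.sum_comm]
  apply Finset.sum_congr rfl
  intro S _
  rw [← Finset.mul_sum]
  congr 1
  by_cases hc : S.card < k
  · rw [Finset.sum_eq_single (k - S.card)]
    · rw [if_pos (by omega), if_pos hc]
    · intro b _ hb
      rw [if_neg (by omega)]
    · intro hmem
      rw [Finset.mem_Icc] at hmem
      omega
  · rw [if_neg hc]
    apply Finset.sum_eq_zero
    intro l hl
    rw [Finset.mem_Icc] at hl
    rw [if_neg (by omega)]


/-- reindexing sum -/
lemma sum_shift (f : ℕ → ℝ) {k : ℕ} (hk : 1 ≤ k) :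
    ∑ l ∈ Finset.Icc 1 (k-1), f (l+1) = ∑ l ∈ Finset.Icc 2 k, f l := by
  rw [show Finset.Icc 2 k = Finset.map (addRightEmbedding 1) (Finset.Icc 1 (k-1)) from by
    rw [Finset.map_add_right_Icc]; congr 1; omega]
  rw [Finset.sum_map]
  rfl

lemma filter_lt (k : ℕ) : (Finset.Icc 1 k).filter (fun l => l < k) = Finset.Icc 1 (k-1) := by
  ext l; simp [Finset.mem_Icc, Finset.mem_filter]; omega

lemma Icc_eq_insert_top {k : ℕ} (hk : 1 ≤ k) :
    Finset.Icc 1 k = insert k (Finset.Icc 1 (k-1)) := by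
  ext l; simp [Finset.mem_Icc]; omega

lemma sum_x_le_one {k n : ℕ} (hk : 1 ≤ k) {x y : ℕ → ℕ → ℝ} (hP : memP k n x y) :
    ∀ i, 1 ≤ i → i ≤ n → ∑ l ∈ Finset.Icc 1 k, x i l ≤ 1 := by
  obtain ⟨h1, h2, h3, h4⟩ := hP
  intro i hi
  induction i, hi using Nat.le_induction with
  | base =>
    intro _
    rw [Icc_eq_insert_top hk, Finset.sum_insert (by simp [Finset.mem_Icc]; omega), h1]
    have : ∑ l ∈ Finset.Icc 1 (k-1), x 1 l = 0 := by
      apply Finset.sum_eq_zero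
      intro l hl
      rw [Finset.mem_Icc] at hl
      exact h2 l hl.1 (by omega)
    rw [this]; norm_num
  | succ i hi ih =>
    intro hin
    have hin' : i ≤ n := by omega
    have hrec : ∀ l ∈ Finset.Icc 1 k,
        x (i+1) l = x i l - y i l + (if l < k then y i (l+1) else 0) := by
      intro l hl
      have := h3 (i+1) (by rw [Finset.mem_Icc]; omega) l hl
      simpa using this
    rw [Finset.sum_congr rfl hrec, Finset.sum_add_distrib, Finset.sum_sub_distrib]
    have hy : ∀ l ∈ Finset.Icc 1 k, 0 ≤ y i l :=
      fun l hl => (h4 i (by rw [Finset.mem_Icc]; omega) l hl).1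
    have e3 : ∑ l ∈ Finset.Icc 1 k, (if l < k then y i (l+1) else 0)
        = ∑ l ∈ Finset.Icc 2 k, y i l := by
      rw [← Finset.sum_filter, filter_lt, sum_shift _ hk]
    rw [e3]
    have hsub : ∑ l ∈ Finset.Icc 2 k, y i l ≤ ∑ l ∈ Finset.Icc 1 k, y i l := by
      apply Finset.sum_le_sum_of_subset_of_nonneg
      · intro l hl; rw [Finset.mem_Icc] at *; omega
      · intro l hl _; exact hy l hl
    have := ih hin'
    linarith


end Stmt7Aux

/-- lower bound for OST versus the ex-ante relaxation:
`innerLP^{OST(J,ρ)/ExAnte}_{k,n}(G) ≥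
  min{P(Σ_{i<n} Ber(τ_i(J,ρ)) < k), E[min{Σ_{i<n} Ber(τ_i(J,ρ)), k}]/k}`. -/
theorem stmt7 (k n m : ℕ) (hk : 1 ≤ k) (hkn : k < n) (hm : 1 ≤ m)
    (G : ℕ → ℕ → ℝ) (hG : IsTypeDist n m G)
    (J : ℕ) (hJ : J ∈ Finset.Icc 1 m) (ρ : ℝ) (hρ : ρ ∈ Set.Ioc (0:ℝ) 1) :
    min (probLt (tauOf G J ρ) (n-1) k) (eMinBer (tauOf G J ρ) (n-1) k / k)
      ≤ innerLP_OST_ExAnte k n m G J ρ := by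
  obtain ⟨hJ1, hJm⟩ := Finset.mem_Icc.mp hJ
  obtain ⟨hρ0, hρ1⟩ := hρ
  set τ : ℕ → ℝ := tauOf G J ρ with hτdef
  -- monotonicity of G
  have hGmono : ∀ i ∈ Finset.Icc 1 n, ∀ a b : ℕ, a ≤ b → b ≤ m → G i a ≤ G i b := by
    intro i hi a b hab hbm
    obtain ⟨h0, h1, hchain⟩ := hG i hi
    clear hi
    induction b with
    | zero =>
      have : a = 0 := by omega
      subst this; exact le_refl _
    | succ b ih =>
      rcases Nat.eq_or_lt_of_le hab with h | h
      · subst h; exact le_refl _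
      · have e1 : G i a ≤ G i b := ih (by omega) (by omega)
        have e2 : G i b ≤ G i (b+1) := by
          have := hchain (b+1) (Finset.mem_Icc.mpr ⟨by omega, hbm⟩)
          simpa using this
        linarith
  have hG0 : ∀ i ∈ Finset.Icc 1 n, ∀ j, j ≤ m → 0 ≤ G i j := by
    intro i hi j hj
    have := hGmono i hi 0 j (by omega) hj
    rw [(hG i hi).1] at this
    exact this
  have hG1 : ∀ i ∈ Finset.Icc 1 n, ∀ j, j ≤ m → G i j ≤ 1 := by
    intro i hi j hj
    have := hGmono i hi j m hj (le_refl m)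
    rw [(hG i hi).2.1] at this
    exact this
  -- bounds on τ
  have htau2 : ∀ i ∈ Finset.Icc 1 n, G i (J-1) ≤ τ i ∧ τ i ≤ G i J := by
    intro i hi
    have hmono := hGmono i hi (J-1) J (by omega) hJm
    constructor
    · rw [hτdef]; unfold tauOf; nlinarith
    · rw [hτdef]; unfold tauOf; nlinarith
  have htau : ∀ i ∈ Finset.Icc 1 n, 0 ≤ τ i ∧ τ i ≤ 1 := by
    intro i hi
    constructor
    · exact le_trans (hG0 i hi (J-1) (by omega)) (htau2 i hi).1
    · exact le_trans (htau2 i hi).2 (hG1 i hi J hJm)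
  have hpt : ∀ t, t ≤ n → ∀ i ∈ Finset.Icc 1 t, 0 ≤ τ i ∧ τ i ≤ 1 := by
    intro t ht i hi
    rw [Finset.mem_Icc] at hi
    exact htau i (Finset.mem_Icc.mpr ⟨hi.1, by omega⟩)
  have hn1 : n - 1 ≤ n := by omega
  have hprobnn : 0 ≤ probLt τ (n-1) k := Stmt7Aux.probLt_nonneg (hpt (n-1) hn1)
  have hEnn : 0 ≤ eMinBer τ (n-1) k := Stmt7Aux.eMinBer_nonneg (hpt (n-1) hn1)
  have hkpos : (0:ℝ) < k := by exact_mod_cast hk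
  have hθ0nn : 0 ≤ min (probLt τ (n-1) k) (eMinBer τ (n-1) k / k) :=
    le_min hprobnn (div_nonneg hEnn (le_of_lt hkpos))
  -- xv nonneg helper
  have hxvnn : ∀ i, i ≤ n → ∀ l, 0 ≤ Stmt7Aux.xv τ k i l := by
    intro i hi l
    exact Stmt7Aux.xv_nonneg (hpt (i-1) (by omega))
  unfold innerLP_OST_ExAnte
  -- bounded above
  have hbdd : BddAbove {θ : ℝ | ∃ x y, memP k n x y ∧
      (∀ i ∈ Finset.Icc 1 n, ∀ l ∈ Finset.Icc 1 k, y i l = τ i * x i l) ∧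
      ∀ j ∈ Finset.Icc 1 m, θ * QExAnte k n G j ≤ coverSum k n G j x y} := by
    refine ⟨(n:ℝ)/k, ?_⟩
    rintro θ ⟨x, y, hP, -, hcons⟩
    have hQm : QExAnte k n G m = k := by
      unfold QExAnte
      have hs : ∑ i ∈ Finset.Icc 1 n, G i m = n := by
        rw [Finset.sum_congr rfl (fun i hi => (hG i hi).2.1)]
        simp [Nat.card_Icc]
      rw [hs]
      exact min_eq_right (by exact_mod_cast le_of_lt hkn)
    have h1 := hcons m (Finset.mem_Icc.mpr ⟨hm, le_refl m⟩)
    rw [hQm] at h1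
    have h2 : coverSum k n G m x y ≤ n := by
      unfold coverSum
      calc ∑ i ∈ Finset.Icc 1 n, ∑ l ∈ Finset.Icc 1 k, min (y i l) (G i m * x i l)
          ≤ ∑ i ∈ Finset.Icc 1 n, (1:ℝ) := by
            apply Finset.sum_le_sum
            intro i hi
            calc ∑ l ∈ Finset.Icc 1 k, min (y i l) (G i m * x i l)
                ≤ ∑ l ∈ Finset.Icc 1 k, x i l := by
                  apply Finset.sum_le_sum
                  intro l hl
                  exact le_trans (min_le_left _ _) (hP.2.2.2 i hi l hl).2
              _ ≤ 1 := by
                  rw [Finset.mem_Icc] at hi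
                  exact Stmt7Aux.sum_x_le_one hk hP i hi.1 hi.2
        _ = n := by simp [Nat.card_Icc]
    rw [le_div_iff₀ hkpos]
    linarith
  -- the witness
  apply le_csSup hbdd
  refine ⟨fun i l => Stmt7Aux.xv τ k i l, fun i l => τ i * Stmt7Aux.xv τ k i l,
    ⟨?_, ?_, ?_, ?_⟩, ?_, ?_⟩
  · show Stmt7Aux.xv τ k 1 k = 1
    rw [Stmt7Aux.xv_one]; simp
  · intro l _ hlk
    show Stmt7Aux.xv τ k 1 l = 0
    rw [Stmt7Aux.xv_one, if_neg (by omega)]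
  · intro i hi l hl
    rw [Finset.mem_Icc] at hi hl
    exact Stmt7Aux.xv_succ τ k hi.1 hl.1 hl.2
  · intro i hi l hl
    rw [Finset.mem_Icc] at hi
    have hx := hxvnn i hi.2 l
    have ht := htau i (Finset.mem_Icc.mpr hi)
    constructor
    · exact mul_nonneg ht.1 hx
    · show τ i * Stmt7Aux.xv τ k i l ≤ Stmt7Aux.xv τ k i l
      nlinarith [mul_le_mul_of_nonneg_right ht.2 hx]
  · intro i _ l _; rfl
  -- the constraints
  intro j hj
  rw [Finset.mem_Icc] at hj
  have hcover : coverSum k n G j (fun i l => Stmt7Aux.xv τ k i l)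
      (fun i l => τ i * Stmt7Aux.xv τ k i l)
      = ∑ i ∈ Finset.Icc 1 n, min (τ i) (G i j) * probLt τ (i-1) k := by
    unfold coverSum
    apply Finset.sum_congr rfl
    intro i hi
    rw [Finset.mem_Icc] at hi
    calc ∑ l ∈ Finset.Icc 1 k, min (τ i * Stmt7Aux.xv τ k i l) (G i j * Stmt7Aux.xv τ k i l)
        = ∑ l ∈ Finset.Icc 1 k, min (τ i) (G i j) * Stmt7Aux.xv τ k i l := by
          apply Finset.sum_congr rfl
          intro l _
          exact (min_mul_of_nonneg _ _ (hxvnn i hi.2 l)).symm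
      _ = min (τ i) (G i j) * probLt τ (i-1) k := by
          rw [← Finset.mul_sum, Stmt7Aux.sum_xv τ hk i]
  rw [hcover]
  have hQnn : 0 ≤ QExAnte k n G j := by
    apply le_min _ (le_of_lt hkpos)
    exact Finset.sum_nonneg fun i hi => hG0 i hi j hj.2
  by_cases hcase : j < J
  · -- small types: min = G i j
    have hmin : ∀ i ∈ Finset.Icc 1 n, min (τ i) (G i j) = G i j := by
      intro i hi
      exact min_eq_right (le_trans (hGmono i hi j (J-1) (by omega) (by omega)) (htau2 i hi).1)
    rw [Finset.sum_congr rfl (fun i hi => by rw [hmin i hi])]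
    have step1 : ∑ i ∈ Finset.Icc 1 n, G i j * probLt τ (n-1) k
        ≤ ∑ i ∈ Finset.Icc 1 n, G i j * probLt τ (i-1) k := by
      apply Finset.sum_le_sum
      intro i hi
      rw [Finset.mem_Icc] at hi
      exact mul_le_mul_of_nonneg_left
        (Stmt7Aux.probLt_antitone (by omega) (hpt (n-1) hn1))
        (hG0 i (Finset.mem_Icc.mpr hi) j hj.2)
    have step2 : min (probLt τ (n-1) k) (eMinBer τ (n-1) k / k) * QExAnte k n G j
        ≤ probLt τ (n-1) k * QExAnte k n G j :=
      mul_le_mul_of_nonneg_right (min_le_left _ _) hQnn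
    have step3 : probLt τ (n-1) k * QExAnte k n G j
        ≤ probLt τ (n-1) k * ∑ i ∈ Finset.Icc 1 n, G i j :=
      mul_le_mul_of_nonneg_left (min_le_left _ _) hprobnn
    have step4 : probLt τ (n-1) k * ∑ i ∈ Finset.Icc 1 n, G i j
        = ∑ i ∈ Finset.Icc 1 n, G i j * probLt τ (n-1) k := by
      rw [Finset.mul_sum]
      exact Finset.sum_congr rfl fun i _ => mul_comm _ _
    linarith
  · -- large types: min = τ i
    push_neg at hcase
    have hmin : ∀ i ∈ Finset.Icc 1 n, min (τ i) (G i j) = τ i := by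
      intro i hi
      exact min_eq_left (le_trans (htau2 i hi).2 (hGmono i hi J j hcase hj.2))
    rw [Finset.sum_congr rfl (fun i hi => by rw [hmin i hi]), Stmt7Aux.sum_tau_eq]
    have hstep : eMinBer τ (n-1) k ≤ eMinBer τ n k := by
      have hrw : n - 1 + 1 = n := by omega
      calc eMinBer τ (n-1) k
          ≤ eMinBer τ (n-1) k + τ (n-1+1) * probLt τ (n-1) k := by
            have ht := htau (n-1+1) (Finset.mem_Icc.mpr ⟨by omega, by omega⟩)
            nlinarith [ht.1]
        _ = eMinBer τ (n-1+1) k := (Stmt7Aux.eMinBer_succ τ (n-1) k).symm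
        _ = eMinBer τ n k := by rw [hrw]
    have step2 : min (probLt τ (n-1) k) (eMinBer τ (n-1) k / k) * QExAnte k n G j
        ≤ min (probLt τ (n-1) k) (eMinBer τ (n-1) k / k) * k :=
      mul_le_mul_of_nonneg_left (min_le_right _ _) hθ0nn
    have step3 : min (probLt τ (n-1) k) (eMinBer τ (n-1) k / k) * k
        ≤ (eMinBer τ (n-1) k / k) * k :=
      mul_le_mul_of_nonneg_right (min_le_right _ _) (le_of_lt hkpos)
    have step4 : (eMinBer τ (n-1) k / k) * k = eMinBer τ (n-1) k :=
      div_mul_cancel₀ _ (ne_of_gt hkpos)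
    linarith
end
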